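/- arXiv:1709.03801 — 2 statements merged into one kernel-verified Lean document; each statement's English description precedes it below -/
import Mathlib

section
/- Let A be a synaptic algebra and let a ∈ A and λ ∈ ℝ. Then: (i) p_{−a,λ} = 1 − p_{a,−λ} + d_{a,−λ}, where d_{a,μ} := 1 − (a − μ)° is the μ-eigenprojection of a; (ii) p_{−a,λ} = 1 − ⋁_{μ∈ℝ, μ<−λ} p_{a,μ}; (iii) p_{1−a,λ} = 1 − ⋁_{μ∈ℝ, μ<1−λ} p_{a,μ}. -/
open Filter Topology

/-- The order-unit norm associated with an order relation `le` on a real algebra: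
`‖a‖ = inf {λ > 0 : −λ ≤ a ≤ λ}`. -/
noncomputable def ouNorm {R : Type*} [Ring R] [Algebra ℝ R] (le : R → R → Prop) (a : R) : ℝ :=
  sInf {l : ℝ | 0 < l ∧ le (algebraMap ℝ R (-l)) a ∧ le a (algebraMap ℝ R l)}

/-- A synaptic algebra: a real linear subspace `A` (containing `1`) of a unital associative
algebra `R` over `ℝ` (a complex algebra is in particular a real algebra), equipped with a
partial order making it an Archimedean partially ordered real linear space with order unit `1`,
and satisfying axioms SA1–SA8.  The square root (SA5) and the carrier (SA6) are bundled as
data together with their defining properties. -/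
structure SynapticAlgebra (R : Type*) [Ring R] [Algebra ℝ R] where
  A : Submodule ℝ R
  one_mem : (1 : R) ∈ A
  /-- the synaptic order (meaningful on elements of `A`) -/
  le : R → R → Prop
  -- SA1 : Archimedean partially ordered real linear space with order unit 1
  le_refl : ∀ a ∈ A, le a a
  le_antisymm : ∀ a ∈ A, ∀ b ∈ A, le a b → le b a → a = b
  le_trans : ∀ a ∈ A, ∀ b ∈ A, ∀ c ∈ A, le a b → le b c → le a c
  add_le_add_right : ∀ a ∈ A, ∀ b ∈ A, ∀ c ∈ A, le a b → le (a + c) (b + c)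
  smul_nonneg : ∀ r : ℝ, 0 ≤ r → ∀ a ∈ A, le 0 a → le 0 (r • a)
  arch : ∀ a ∈ A, ∀ b ∈ A, (∀ n : ℕ, le ((n : ℝ) • a) b) → le a 0
  one_order_unit : ∀ a ∈ A, ∃ n : ℕ, le a ((n : ℝ) • (1 : R))
  zero_ne_one : (0 : R) ≠ 1
  -- SA2
  sq_mem : ∀ a ∈ A, a * a ∈ A
  sq_nn : ∀ a ∈ A, le 0 (a * a)
  -- SA3
  quad_mem : ∀ a ∈ A, ∀ b ∈ A, a * b * a ∈ A
  quad_nn : ∀ a ∈ A, ∀ b ∈ A, le 0 a → le 0 b → le 0 (a * b * a)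
  -- SA4
  quad_zero : ∀ a ∈ A, ∀ b ∈ A, le 0 b → a * b * a = 0 → a * b = 0 ∧ b * a = 0
  -- SA5 : square roots
  sqrt : R → R
  sqrt_mem : ∀ a ∈ A, le 0 a → sqrt a ∈ A
  sqrt_nn : ∀ a ∈ A, le 0 a → le 0 (sqrt a)
  sqrt_sq : ∀ a ∈ A, le 0 a → sqrt a * sqrt a = a
  sqrt_bicomm : ∀ a ∈ A, le 0 a → ∀ b ∈ A, a * b = b * a → sqrt a * b = b * sqrt a
  sqrt_unique : ∀ a ∈ A, le 0 a → ∀ b ∈ A, le 0 b → b * b = a →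
    (∀ c ∈ A, a * c = c * a → b * c = c * b) → b = sqrt a
  -- SA6 : carriers
  carr : R → R
  carr_mem : ∀ a ∈ A, carr a ∈ A
  carr_idem : ∀ a ∈ A, carr a * carr a = carr a
  carr_spec : ∀ a ∈ A, ∀ b ∈ A, (a * b = 0 ↔ carr a * b = 0)
  -- SA7
  inv_exists : ∀ a ∈ A, le 1 a → ∃ b ∈ A, a * b = 1 ∧ b * a = 1
  -- SA8
  comm_closed : ∀ a ∈ A, ∀ b ∈ A, ∀ f : ℕ → R, (∀ n, f n ∈ A) →
    (∀ n, le (f n) (f (n + 1))) → (∀ m n, f m * f n = f n * f m) →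
    (∀ n, f n * b = b * f n) →
    Filter.Tendsto (fun n => ouNorm le (a - f n)) Filter.atTop (nhds 0) →
    a * b = b * a

namespace SynapticAlgebra

variable {R : Type*} [Ring R] [Algebra ℝ R] (S : SynapticAlgebra R)

/-- `|a| := (a²)^{1/2}`. -/
def absval (a : R) : R := S.sqrt (a * a)

/-- The positive part `a⁺ := (|a| + a)/2`. -/
noncomputable def pospart (a : R) : R := (2⁻¹ : ℝ) • (S.absval a + a)

/-- The spectral resolution `p_{a,λ} := 1 − ((a − λ)⁺)°`. -/
noncomputable def specProj (a : R) (l : ℝ) : R :=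
  1 - S.carr (S.pospart (a - algebraMap ℝ R l))

/-- The spectral order: `a ≤ₛ b` iff `p_{b,λ} ≤ p_{a,λ}` for all real `λ`. -/
noncomputable def specLE (a b : R) : Prop :=
  ∀ l : ℝ, S.le (S.specProj b l) (S.specProj a l)

/-- Projections of the synaptic algebra. -/
def IsProj (p : R) : Prop := p ∈ S.A ∧ p * p = p

/-- The set `E = {e ∈ A : 0 ≤ e ≤ 1}` of effects. -/
def effects : Set R := {e | e ∈ S.A ∧ S.le 0 e ∧ S.le e 1}

/-- `p` is the infimum of the set `T` in the orthomodular lattice `P` of projections. -/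
def IsProjInf (p : R) (T : Set R) : Prop :=
  S.IsProj p ∧ (∀ q ∈ T, S.le p q) ∧ ∀ r, S.IsProj r → (∀ q ∈ T, S.le r q) → S.le r p

/-- `p` is the supremum of the set `T` in the orthomodular lattice `P` of projections. -/
def IsProjSup (p : R) (T : Set R) : Prop :=
  S.IsProj p ∧ (∀ q ∈ T, S.le q p) ∧ ∀ r, S.IsProj r → (∀ q ∈ T, S.le q r) → S.le p r

/-- A Banach (norm-complete) synaptic algebra: every Cauchy sequence in `A`
(w.r.t. the order-unit norm) converges in norm to an element of `A`. -/
noncomputable def IsBanach : Prop :=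
  ∀ f : ℕ → R, (∀ n, f n ∈ S.A) →
    (∀ ε : ℝ, 0 < ε → ∃ N : ℕ, ∀ m ≥ N, ∀ n ≥ N, ouNorm S.le (f m - f n) < ε) →
    ∃ a ∈ S.A, Filter.Tendsto (fun n => ouNorm S.le (a - f n)) Filter.atTop (nhds 0)

/-- The `λ`-eigenprojection `d_{a,λ} := 1 − (a − λ)°`. -/
noncomputable def eigenProj (a : R) (l : ℝ) : R := 1 - S.carr (a - algebraMap ℝ R l)

/-- The bicommutant `CC(a)` (within `A`). -/
def Bicomm (a : R) : Set R :=
  {b | b ∈ S.A ∧ ∀ c ∈ S.A, a * c = c * a → b * c = c * b}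

/-- Projections `p` and `q` are exchanged by a symmetry (`s² = 1`, `sps = q`). -/
def ExchBySymm (p q : R) : Prop := ∃ s ∈ S.A, s * s = 1 ∧ s * p * s = q

/-- The dimension equivalence on projections: a finite chain of projections, consecutive
ones exchanged by symmetries. -/
def DimEquiv (p q : R) : Prop :=
  ∃ (n : ℕ) (c : ℕ → R), c 0 = p ∧ c n = q ∧ (∀ i ≤ n, S.IsProj (c i)) ∧
    ∀ i < n, S.ExchBySymm (c i) (c (i + 1))

/-- `A` is of finite type iff every projection is finite. -/
def FiniteType : Prop :=
  ∀ p, S.IsProj p → ∀ q, S.IsProj q → S.DimEquiv q p → S.le q p → q = p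

/-- The projection lattice `P` is a complete orthomodular lattice: every set of projections
has an infimum and a supremum in `P`. -/
def ProjComplete : Prop :=
  ∀ T : Set R, (∀ p ∈ T, S.IsProj p) →
    (∃ q, S.IsProjInf q T) ∧ (∃ q, S.IsProjSup q T)

/-- A bounded resolution of identity with bound `K`. -/
def IsBoundedResId (p : ℝ → R) (K : ℝ) : Prop :=
  0 ≤ K ∧ (∀ l, S.IsProj (p l)) ∧
  (∀ l, l < -K → p l = 0) ∧ (∀ l, K ≤ l → p l = 1) ∧
  (∀ l l', l ≤ l' → S.le (p l) (p l')) ∧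
  (∀ l, S.IsProjInf (p l) {x | ∃ l' > l, x = p l'})

end SynapticAlgebra

/-- `c` is a regular involution on the subset `T` of the poset `(T, le')`. -/
def IsRegInvPoset {R : Type*} (le' : R → R → Prop) (T : Set R) (c : R → R) : Prop :=
  (∀ a ∈ T, c a ∈ T) ∧ (∀ a ∈ T, c (c a) = a) ∧
  (∀ a ∈ T, ∀ b ∈ T, le' a b → le' (c b) (c a)) ∧
  (∀ a ∈ T, ∀ b ∈ T, le' a (c a) → le' b (c b) → le' a (c b))

/-- `(T, le', c, 0, 1)` is a Kleene poset: a bounded poset with a regular involution. -/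
def IsKleene {R : Type*} [Zero R] [One R] (le' : R → R → Prop) (T : Set R) (c : R → R) : Prop :=
  IsRegInvPoset le' T c ∧ (0 : R) ∈ T ∧ (1 : R) ∈ T ∧ ∀ a ∈ T, le' 0 a ∧ le' a 1

/-- Every pair of elements of `T` has an infimum and a supremum in `(T, le')`. -/
def HasBinSupInf {R : Type*} (le' : R → R → Prop) (T : Set R) : Prop :=
  ∀ a ∈ T, ∀ b ∈ T,
    (∃ m ∈ T, le' m a ∧ le' m b ∧ ∀ x ∈ T, le' x a → le' x b → le' x m) ∧
    (∃ j ∈ T, le' a j ∧ le' b j ∧ ∀ x ∈ T, le' a x → le' b x → le' j x)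

/-!
Put `b := a + λ`. Since `(-b)⁺ = b⁻`, we have `p_{-a,λ} = 1 - (b⁻)°`, and (i) is the splitting
`b° = (b⁺)° + (b⁻)°` of the carrier into two orthogonal projections.

For (ii) we show that `(b⁻)°` is the supremum of the `p_{a,μ}`, `μ < -λ`. With `c := a - μ` and
`t := -λ - μ > 0`, the projection `r := 1 - ((c - t)⁻)°` annihilates `c⁻ ≤ (c - t)⁻`, and on the
range of `1 - c°` the element `c - t` equals `-t`, so `r` annihilates `1 - c°` as well; hence
`r` annihilates `1 - (c⁺)° = (1 - c°) + (c⁻)°`, i.e. `p_{a,μ} ≤ (b⁻)°`. Conversely, if a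
projection `e` dominates every `p_{a,μ}`, then `(b + t)⁻ (1 - e) = 0` for all `t > 0`, and
`b⁻ ≤ (b + t)⁻ + t` gives `(1 - e) b⁻ (1 - e) ≤ t` for all `t > 0`, whence `b⁻ (1 - e) = 0`
and `(b⁻)° ≤ e`. Both inequalities for negative parts come from `x⁺ ≤ (x + t)⁺`, which follows
from monotonicity of the square root on commuting positive elements.

Finally `1 - a - λ = -a - (λ - 1)`, so (iii) is (ii) at `λ - 1`.
-/

namespace SynapticAlgebra

variable {R : Type*} [Ring R] [Algebra ℝ R] (S : SynapticAlgebra R)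

lemma algebraMap_mem (r : ℝ) : algebraMap ℝ R r ∈ S.A := by
  rw [Algebra.algebraMap_eq_smul_one]; exact S.A.smul_mem r S.one_mem

lemma le_iff_sub_nonneg {a b : R} (ha : a ∈ S.A) (hb : b ∈ S.A) :
    S.le a b ↔ S.le 0 (b - a) := by
  constructor
  · intro h
    simpa [sub_eq_add_neg] using S.add_le_add_right a ha b hb (-a) (S.A.neg_mem ha) h
  · intro h
    simpa using S.add_le_add_right 0 S.A.zero_mem (b - a) (S.A.sub_mem hb ha) a ha h

lemma eq_zero_of_nonneg_of_nonpos {a : R} (ha : a ∈ S.A) (h₀ : S.le 0 a) (h₁ : S.le a 0) :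
    a = 0 :=
  S.le_antisymm a ha 0 S.A.zero_mem h₁ h₀

lemma add_nonneg {a b : R} (ha : a ∈ S.A) (hb : b ∈ S.A) (ha₀ : S.le 0 a) (hb₀ : S.le 0 b) :
    S.le 0 (a + b) := by
  have hab := S.add_le_add_right 0 S.A.zero_mem a ha b hb ha₀
  rw [zero_add] at hab
  exact S.le_trans 0 S.A.zero_mem b hb (a + b) (S.A.add_mem ha hb) hb₀ hab

lemma eq_zero_of_add_eq_zero {a b : R} (ha : a ∈ S.A) (hb : b ∈ S.A) (ha₀ : S.le 0 a)
    (hb₀ : S.le 0 b) (h : a + b = 0) : a = 0 := by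
  refine S.eq_zero_of_nonneg_of_nonpos ha ha₀ ?_
  have hab := S.add_le_add_right 0 S.A.zero_mem b hb a ha hb₀
  rwa [zero_add, add_comm, h] at hab

lemma zero_le_one : S.le 0 1 := by
  simpa using S.sq_nn 1 S.one_mem

lemma smul_le_smul {a b : R} (ha : a ∈ S.A) (hb : b ∈ S.A) {r : ℝ} (hr : 0 ≤ r)
    (h : S.le a b) : S.le (r • a) (r • b) := by
  rw [S.le_iff_sub_nonneg ha hb] at h
  rw [S.le_iff_sub_nonneg (S.A.smul_mem _ ha) (S.A.smul_mem _ hb), ← smul_sub]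
  exact S.smul_nonneg r hr _ (S.A.sub_mem hb ha) h

lemma conj_le_conj {a x y : R} (ha : a ∈ S.A) (hx : x ∈ S.A) (hy : y ∈ S.A)
    (ha₀ : S.le 0 a) (h : S.le x y) : S.le (a * x * a) (a * y * a) := by
  rw [S.le_iff_sub_nonneg hx hy] at h
  rw [S.le_iff_sub_nonneg (S.quad_mem a ha x hx) (S.quad_mem a ha y hy)]
  simpa [mul_sub, sub_mul] using S.quad_nn a ha (y - x) (S.A.sub_mem hy hx) ha₀ h

lemma nonpos_of_forall_le_smul_one {a : R} (ha : a ∈ S.A)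
    (h : ∀ t : ℝ, 0 < t → S.le a (t • 1)) : S.le a 0 := by
  refine S.arch a ha 1 S.one_mem fun n => ?_
  rcases Nat.eq_zero_or_pos n with rfl | hn
  · simpa using S.zero_le_one
  · have hn' : (n : ℝ) ≠ 0 := by positivity
    simpa [smul_smul, mul_inv_cancel₀ hn'] using
      S.smul_le_smul ha (S.A.smul_mem _ S.one_mem) n.cast_nonneg (h (n : ℝ)⁻¹ (by positivity))

lemma nonpos_of_mul_self_eq_zero {x : R} (hx : x ∈ S.A) (h : x * x = 0) : S.le x 0 := by
  have h₂ : S.le ((2 : ℝ) • x) 0 := by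
    refine S.arch _ (S.A.smul_mem _ hx) 1 S.one_mem fun n => ?_
    -- `0 ≤ (n x - 1)² = 1 - 2 n x` since `x² = 0`
    have hsq := S.sq_nn ((n : ℝ) • x - 1) (S.A.sub_mem (S.A.smul_mem _ hx) S.one_mem)
    have hexp : ((n : ℝ) • x - 1) * ((n : ℝ) • x - 1) = 1 - (n : ℝ) • (2 : ℝ) • x := by
      simp only [sub_mul, mul_sub, smul_mul_smul_comm, h, mul_one, one_mul, smul_zero]
      module
    rwa [hexp, ← S.le_iff_sub_nonneg (S.A.smul_mem _ (S.A.smul_mem _ hx)) S.one_mem] at hsq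
  simpa [smul_smul] using
    S.smul_le_smul (S.A.smul_mem _ hx) S.A.zero_mem (by norm_num : (0 : ℝ) ≤ 2⁻¹) h₂

lemma eq_zero_of_mul_self_eq_zero {x : R} (hx : x ∈ S.A) (h : x * x = 0) : x = 0 := by
  have hneg : S.le (-x) 0 := S.nonpos_of_mul_self_eq_zero (S.A.neg_mem hx) (by simpa using h)
  rw [S.le_iff_sub_nonneg (S.A.neg_mem hx) S.A.zero_mem, zero_sub, neg_neg] at hneg
  exact S.eq_zero_of_nonneg_of_nonpos hx hneg (S.nonpos_of_mul_self_eq_zero hx h)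

lemma mul_eq_zero_comm {x y : R} (hx : x ∈ S.A) (hy : y ∈ S.A) (h : x * y = 0) :
    y * x = 0 := by
  have hyx : y * x ∈ S.A := by
    have : y * x = (y + x) * (y + x) - y * y - x * x := by
      rw [add_mul, mul_add, mul_add, h]; abel
    rw [this]
    exact S.A.sub_mem (S.A.sub_mem (S.sq_mem _ (S.A.add_mem hy hx)) (S.sq_mem _ hy))
      (S.sq_mem _ hx)
  refine S.eq_zero_of_mul_self_eq_zero hyx ?_
  rw [mul_assoc, ← mul_assoc x, h, zero_mul, mul_zero]

lemma eq_zero_of_smul_one_le_of_mul_eq_zero {u x : R} (hu : u ∈ S.A) {t : ℝ} (ht : 0 < t)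
    (ht₁ : S.le (t • 1) u) (h : u * x = 0) : x = 0 := by
  have h₁ : S.le 1 (t⁻¹ • u) := by
    simpa [smul_smul, inv_mul_cancel₀ ht.ne'] using
      S.smul_le_smul (S.A.smul_mem t S.one_mem) hu (inv_nonneg.2 ht.le) ht₁
  obtain ⟨v, -, -, hvu⟩ := S.inv_exists _ (S.A.smul_mem _ hu) h₁
  rw [← one_mul x, ← hvu, mul_assoc, smul_mul_assoc, h, smul_zero, mul_zero]

lemma mul_mem_of_commute {x y : R} (hx : x ∈ S.A) (hy : y ∈ S.A) (h : x * y = y * x) :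
    x * y ∈ S.A := by
  have : x * y = (2⁻¹ : ℝ) • ((x + y) * (x + y) - x * x - y * y) := by
    rw [add_mul, mul_add, mul_add, h]; module
  rw [this]
  exact S.A.smul_mem _ (S.A.sub_mem (S.A.sub_mem (S.sq_mem _ (S.A.add_mem hx hy))
    (S.sq_mem _ hx)) (S.sq_mem _ hy))

lemma mul_nonneg_of_commute {x y : R} (hx : x ∈ S.A) (hy : y ∈ S.A) (hx₀ : S.le 0 x)
    (hy₀ : S.le 0 y) (h : x * y = y * x) : S.le 0 (x * y) := by
  have hsq := S.sqrt_sq x hx hx₀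
  have hcomm := S.sqrt_bicomm x hx hx₀ y hy h
  have : x * y = S.sqrt x * y * S.sqrt x := by
    conv_lhs => rw [← hsq, mul_assoc, hcomm, ← mul_assoc]
  rw [this]
  exact S.quad_nn _ (S.sqrt_mem x hx hx₀) y hy (S.sqrt_nn x hx hx₀) hy₀

section Projections

variable {S}

lemma IsProj.one_sub {p : R} (hp : S.IsProj p) : S.IsProj (1 - p) :=
  ⟨S.A.sub_mem S.one_mem hp.1, by linear_combination (norm := noncomm_ring) hp.2⟩

lemma IsProj.nonneg {p : R} (hp : S.IsProj p) : S.le 0 p := by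
  simpa [hp.2] using S.sq_nn p hp.1

lemma IsProj.le_one {p : R} (hp : S.IsProj p) : S.le p 1 :=
  (S.le_iff_sub_nonneg hp.1 S.one_mem).2 hp.one_sub.nonneg

lemma IsProj.le_iff_mul_eq {p q : R} (hp : S.IsProj p) (hq : S.IsProj q) :
    S.le p q ↔ p * q = p := by
  constructor
  · intro h
    have hpqp : p * q * p = p := by
      refine S.le_antisymm _ (S.quad_mem p hp.1 q hq.1) p hp.1 ?_ ?_
      · simpa [hp.2] using S.conj_le_conj hp.1 hq.1 S.one_mem hp.nonneg hq.le_one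
      · simpa [hp.2] using S.conj_le_conj hp.1 hp.1 hq.1 hp.nonneg h
    have hp1q : p * (1 - q) * p = 0 := by
      linear_combination (norm := noncomm_ring) hp.2 - hpqp
    have := (S.quad_zero p hp.1 (1 - q) hq.one_sub.1 hq.one_sub.nonneg hp1q).1
    linear_combination (norm := noncomm_ring) -this
  · intro h
    have hqp : q * p = p := by
      have := S.mul_eq_zero_comm hp.1 hq.one_sub.1 (by rw [mul_sub, mul_one, h, sub_self])
      linear_combination (norm := noncomm_ring) -this
    have hconj : (1 - p) * q * (1 - p) = q - p := by
      linear_combination (norm := noncomm_ring) h * p - h - hqp + hp.2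
    rw [S.le_iff_sub_nonneg hp.1 hq.1, ← hconj]
    exact S.quad_nn _ hp.one_sub.1 q hq.1 hp.one_sub.nonneg hq.nonneg

lemma IsProjSup.unique {T : Set R} {q q' : R} (hq : S.IsProjSup q T)
    (hq' : S.IsProjSup q' T) : q = q' :=
  S.le_antisymm q hq.1.1 q' hq'.1.1 (hq.2.2 q' hq'.1 hq'.2.1) (hq'.2.2 q hq.1 hq.2.1)

end Projections

lemma isProj_carr {a : R} (ha : a ∈ S.A) : S.IsProj (S.carr a) :=
  ⟨S.carr_mem a ha, S.carr_idem a ha⟩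

lemma mul_carr {a : R} (ha : a ∈ S.A) : a * S.carr a = a := by
  have h := (S.carr_spec a ha _ (S.isProj_carr ha).one_sub.1).2
    (by rw [mul_sub, mul_one, S.carr_idem a ha, sub_self])
  rwa [mul_sub, mul_one, sub_eq_zero, eq_comm] at h

lemma carr_mul {a : R} (ha : a ∈ S.A) : S.carr a * a = a := by
  have h := S.mul_eq_zero_comm ha (S.isProj_carr ha).one_sub.1
    (by rw [mul_sub, mul_one, S.mul_carr ha, sub_self])
  rwa [sub_mul, one_mul, sub_eq_zero, eq_comm] at h

lemma carr_mul_eq_zero {a b : R} (ha : a ∈ S.A) (hb : b ∈ S.A) (h : a * b = 0) :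
    S.carr a * b = 0 :=
  (S.carr_spec a ha b hb).1 h

lemma mul_carr_eq_zero {a b : R} (ha : a ∈ S.A) (hb : b ∈ S.A) (h : b * a = 0) :
    b * S.carr a = 0 :=
  S.mul_eq_zero_comm (S.carr_mem a ha) hb
    (S.carr_mul_eq_zero ha hb (S.mul_eq_zero_comm hb ha h))

lemma carr_eq_of_forall_mul_eq_zero_iff {a e : R} (ha : a ∈ S.A) (he : S.IsProj e)
    (h : ∀ c ∈ S.A, a * c = 0 ↔ e * c = 0) : S.carr a = e := by
  have hae : S.carr a * (1 - e) = 0 :=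
    S.carr_mul_eq_zero ha he.one_sub.1 <| (h _ he.one_sub.1).2 <| by
      rw [mul_sub, mul_one, he.2, sub_self]
  have hea : e * (1 - S.carr a) = 0 :=
    (h _ (S.isProj_carr ha).one_sub.1).1 <| by rw [mul_sub, mul_one, S.mul_carr ha, sub_self]
  have := S.eq_zero_of_mul_self_eq_zero (S.A.sub_mem (S.carr_mem a ha) he.1) <| by
    linear_combination (norm := noncomm_ring) S.carr_idem a ha + he.2 + hae + hea
  exact sub_eq_zero.1 this

lemma mul_eq_zero_of_mul_self_mul_eq_zero {s c : R} (hs : s ∈ S.A) (hs₀ : S.le 0 s)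
    (hc : c ∈ S.A) (h : s * s * c = 0) : s * c = 0 := by
  have hss := S.sq_mem s hs
  set q := 1 - S.carr (s * s) with hq_def
  have hq : S.IsProj q := (S.isProj_carr hss).one_sub
  have hssq : q * (s * s) = 0 :=
    S.mul_eq_zero_comm hss hq.1 (by rw [hq_def, mul_sub, mul_one, S.mul_carr hss, sub_self])
  -- `(q s q)² = q (s q s) q ≤ q s² q = 0`
  have hle : S.le (q * s * q * (q * s * q)) 0 := by
    have := S.conj_le_conj hq.1 (S.quad_mem s hs q hq.1) hss hq.nonneg
      (by simpa using S.conj_le_conj hs hq.1 S.one_mem hs₀ hq.le_one)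
    rw [hssq, zero_mul] at this
    convert this using 1
    linear_combination (norm := noncomm_ring) (q * s) * hq.2 * (s * q)
  have hqsq := S.quad_mem q hq.1 s hs
  have hqsq0 : q * s * q = 0 := S.eq_zero_of_mul_self_eq_zero hqsq <|
    S.eq_zero_of_nonneg_of_nonpos (S.sq_mem _ hqsq) (S.sq_nn _ hqsq) hle
  have hsp : s * S.carr (s * s) = s := by
    have := (S.quad_zero q hq.1 s hs hs₀ hqsq0).2
    rwa [hq_def, mul_sub, mul_one, sub_eq_zero, eq_comm] at this
  rw [← hsp, mul_assoc, S.carr_mul_eq_zero hss hc h, mul_zero]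

lemma nonneg_of_mul_eq_zero_of_add_nonneg {x y : R} (hx : x ∈ S.A) (hy : y ∈ S.A)
    (hxy : x * y = 0) (h₀ : S.le 0 (x + y)) : S.le 0 x := by
  have hyx : y * S.carr x = 0 := S.mul_carr_eq_zero hx hy (S.mul_eq_zero_comm hx hy hxy)
  have hconj : S.carr x * (x + y) * S.carr x = x := by
    rw [mul_add, add_mul, S.carr_mul hx, S.mul_carr hx, mul_assoc, hyx, mul_zero, add_zero]
  rw [← hconj]
  exact S.quad_nn _ (S.carr_mem x hx) _ (S.A.add_mem hx hy) (S.isProj_carr hx).nonneg h₀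

lemma absval_mem {b : R} (hb : b ∈ S.A) : S.absval b ∈ S.A :=
  S.sqrt_mem _ (S.sq_mem b hb) (S.sq_nn b hb)

lemma absval_nonneg {b : R} (hb : b ∈ S.A) : S.le 0 (S.absval b) :=
  S.sqrt_nn _ (S.sq_mem b hb) (S.sq_nn b hb)

lemma absval_mul_self {b : R} (hb : b ∈ S.A) : S.absval b * S.absval b = b * b :=
  S.sqrt_sq _ (S.sq_mem b hb) (S.sq_nn b hb)

lemma absval_commute {b c : R} (hb : b ∈ S.A) (hc : c ∈ S.A) (h : b * c = c * b) :
    S.absval b * c = c * S.absval b :=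
  S.sqrt_bicomm _ (S.sq_mem b hb) (S.sq_nn b hb) c hc <| by
    rw [mul_assoc, h, ← mul_assoc, h, mul_assoc]

lemma absval_neg (b : R) : S.absval (-b) = S.absval b := by
  rw [absval, absval, neg_mul_neg]

noncomputable def negpart (b : R) : R := (2⁻¹ : ℝ) • (S.absval b - b)

lemma pospart_neg (b : R) : S.pospart (-b) = S.negpart b := by
  rw [pospart, negpart, absval_neg, sub_eq_add_neg]

lemma negpart_neg (b : R) : S.negpart (-b) = S.pospart b := by
  rw [← pospart_neg, neg_neg]

lemma pospart_sub_negpart (b : R) : S.pospart b - S.negpart b = b := by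
  rw [pospart, negpart]; module

lemma pospart_add_negpart (b : R) : S.pospart b + S.negpart b = S.absval b := by
  rw [pospart, negpart]; module

lemma pospart_mem {b : R} (hb : b ∈ S.A) : S.pospart b ∈ S.A :=
  S.A.smul_mem _ (S.A.add_mem (S.absval_mem hb) hb)

lemma negpart_mem {b : R} (hb : b ∈ S.A) : S.negpart b ∈ S.A := by
  simpa [pospart_neg] using S.pospart_mem (S.A.neg_mem hb)

lemma negpart_commute {b c : R} (hb : b ∈ S.A) (hc : c ∈ S.A) (h : b * c = c * b) :
    S.negpart b * c = c * S.negpart b := by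
  rw [negpart, smul_mul_assoc, mul_smul_comm, sub_mul, mul_sub, S.absval_commute hb hc h, h]

lemma pospart_mul_negpart {b : R} (hb : b ∈ S.A) : S.pospart b * S.negpart b = 0 := by
  rw [pospart, negpart, smul_mul_smul_comm, add_mul, mul_sub, mul_sub, S.absval_mul_self hb,
    S.absval_commute hb hb rfl]
  simp

lemma negpart_mul_pospart {b : R} (hb : b ∈ S.A) : S.negpart b * S.pospart b = 0 := by
  simpa [pospart_neg, negpart_neg] using S.pospart_mul_negpart (S.A.neg_mem hb)

lemma mul_negpart {b : R} (hb : b ∈ S.A) : b * S.negpart b = -(S.negpart b * S.negpart b) := by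
  nth_rewrite 1 [← S.pospart_sub_negpart b]
  rw [sub_mul, S.pospart_mul_negpart hb, zero_sub]

lemma pospart_nonneg {b : R} (hb : b ∈ S.A) : S.le 0 (S.pospart b) :=
  S.nonneg_of_mul_eq_zero_of_add_nonneg (S.pospart_mem hb) (S.negpart_mem hb)
    (S.pospart_mul_negpart hb) (by rw [pospart_add_negpart]; exact S.absval_nonneg hb)

lemma negpart_nonneg {b : R} (hb : b ∈ S.A) : S.le 0 (S.negpart b) := by
  simpa [pospart_neg] using S.pospart_nonneg (S.A.neg_mem hb)

lemma negpart_mul_one_sub_carr_pospart {b : R} (hb : b ∈ S.A) :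
    S.negpart b * (1 - S.carr (S.pospart b)) = S.negpart b := by
  rw [mul_sub, mul_one, S.mul_carr_eq_zero (S.pospart_mem hb) (S.negpart_mem hb)
    (S.negpart_mul_pospart hb), sub_zero]

lemma carr_eq_carr_pospart_add_carr_negpart {b : R} (hb : b ∈ S.A) :
    S.carr b = S.carr (S.pospart b) + S.carr (S.negpart b) := by
  have hP := S.pospart_mem hb
  have hN := S.negpart_mem hb
  have hPN : S.carr (S.pospart b) * S.carr (S.negpart b) = 0 :=
    S.mul_carr_eq_zero hN (S.carr_mem _ hP)
      (S.carr_mul_eq_zero hP hN (S.pospart_mul_negpart hb))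
  have hNP : S.carr (S.negpart b) * S.carr (S.pospart b) = 0 :=
    S.mul_eq_zero_comm (S.carr_mem _ hP) (S.carr_mem _ hN) hPN
  refine S.carr_eq_of_forall_mul_eq_zero_iff hb ⟨S.A.add_mem (S.carr_mem _ hP)
    (S.carr_mem _ hN), ?_⟩ fun c hc => ⟨fun h => ?_, fun h => ?_⟩
  · linear_combination (norm := noncomm_ring) S.carr_idem _ hP + S.carr_idem _ hN + hPN + hNP
  · have habs : S.absval b * c = 0 :=
      S.mul_eq_zero_of_mul_self_mul_eq_zero (S.absval_mem hb) (S.absval_nonneg hb) hc <| by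
        rw [S.absval_mul_self hb, mul_assoc, h, mul_zero]
    have hPc : S.pospart b * c = 0 := by
      rw [pospart, smul_mul_assoc, add_mul, habs, h, add_zero, smul_zero]
    have hNc : S.negpart b * c = 0 := by
      rw [negpart, smul_mul_assoc, sub_mul, habs, h, sub_zero, smul_zero]
    rw [add_mul, S.carr_mul_eq_zero hP hc hPc, S.carr_mul_eq_zero hN hc hNc, add_zero]
  · have hPc : S.carr (S.pospart b) * c = 0 := by
      simpa [← mul_assoc, mul_add, add_mul, S.carr_idem _ hP, hPN] using
        congrArg (S.carr (S.pospart b) * ·) h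
    have hNc : S.carr (S.negpart b) * c = 0 := by
      simpa [← mul_assoc, mul_add, add_mul, S.carr_idem _ hN, hNP] using
        congrArg (S.carr (S.negpart b) * ·) h
    rw [← S.pospart_sub_negpart b, sub_mul, (S.carr_spec _ hP c hc).2 hPc,
      (S.carr_spec _ hN c hc).2 hNc, sub_zero]

lemma negpart_sub_eq_zero_of_mul_self_le_mul_self {x y : R} (hx : x ∈ S.A) (hy : y ∈ S.A)
    (hx₀ : S.le 0 x) (hy₀ : S.le 0 y) (hxy : x * y = y * x) (h : S.le (x * x) (y * y)) :
    S.negpart (y - x) = 0 := by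
  have hz : y - x ∈ S.A := S.A.sub_mem hy hx
  set w := S.negpart (y - x)
  have hw : w ∈ S.A := S.negpart_mem hz
  have hww := S.sq_mem w hw
  have hwx : w * x = x * w :=
    S.negpart_commute hz hx (by linear_combination (norm := noncomm_ring) -hxy)
  have hwy : w * y = y * w :=
    S.negpart_commute hz hy (by linear_combination (norm := noncomm_ring) -hxy)
  have hwwx : x * (w * w) = w * w * x := by
    linear_combination (norm := noncomm_ring) -(hwx * w) - w * hwx
  have hwwy : y * (w * w) = w * w * y := by
    linear_combination (norm := noncomm_ring) -(hwy * w) - w * hwy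
  have hxw := S.mul_mem_of_commute hx hww hwwx
  have hyw := S.mul_mem_of_commute hy hww hwwy
  have hxw₀ := S.mul_nonneg_of_commute hx hww hx₀ (S.sq_nn w hw) hwwx
  have hyw₀ := S.mul_nonneg_of_commute hy hww hy₀ (S.sq_nn w hw) hwwy
  -- `w (y² - x²) = -(x + y) w²` is nonnegative, and so is `(x + y) w²`; hence both vanish
  have hwd : w * (y * y - x * x) = -((x + y) * (w * w)) := by
    rw [show y * y - x * x = (x + y) * (y - x) by
        linear_combination (norm := noncomm_ring) -hxy,
      ← mul_assoc, mul_add, hwx, hwy, ← add_mul, mul_assoc, S.negpart_commute hz hz rfl,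
      S.mul_negpart hz, mul_neg]
  have hwd₀ : S.le 0 (w * (y * y - x * x)) :=
    S.mul_nonneg_of_commute hw (S.A.sub_mem (S.sq_mem y hy) (S.sq_mem x hx))
      (S.negpart_nonneg hz) ((S.le_iff_sub_nonneg (S.sq_mem x hx) (S.sq_mem y hy)).1 h) <| by
        linear_combination (norm := noncomm_ring) hwy * y + y * hwy - hwx * x - x * hwx
  have hsum : x * (w * w) + y * (w * w) = 0 := by
    refine S.eq_zero_of_nonneg_of_nonpos (S.A.add_mem hxw hyw) (S.add_nonneg hxw hyw hxw₀ hyw₀) ?_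
    rwa [S.le_iff_sub_nonneg (S.A.add_mem hxw hyw) S.A.zero_mem, zero_sub, ← add_mul, ← hwd]
  have hxw0 := S.eq_zero_of_add_eq_zero hxw hyw hxw₀ hyw₀ hsum
  rw [hxw0, zero_add] at hsum
  have hw3 : w * (w * w) = 0 := by
    have hzw : (y - x) * w = -(w * w) := S.mul_negpart hz
    calc w * (w * w) = -((y - x) * (w * w)) := by
          rw [← mul_assoc (y - x), hzw, neg_mul, neg_neg, mul_assoc]
      _ = 0 := by rw [sub_mul, hsum, hxw0, sub_zero, neg_zero]
  exact S.eq_zero_of_mul_self_eq_zero hw <|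
    S.eq_zero_of_mul_self_eq_zero hww (by rw [mul_assoc, hw3, mul_zero])

lemma le_of_mul_self_le_mul_self {x y : R} (hx : x ∈ S.A) (hy : y ∈ S.A) (hx₀ : S.le 0 x)
    (hy₀ : S.le 0 y) (hxy : x * y = y * x) (h : S.le (x * x) (y * y)) : S.le x y := by
  rw [S.le_iff_sub_nonneg hx hy, ← S.pospart_sub_negpart (y - x),
    S.negpart_sub_eq_zero_of_mul_self_le_mul_self hx hy hx₀ hy₀ hxy h, sub_zero]
  exact S.pospart_nonneg (S.A.sub_mem hy hx)

lemma pospart_le_pospart_add {x : R} (hx : x ∈ S.A) {t : ℝ} (ht : 0 ≤ t) :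
    S.le (S.pospart x) (S.pospart (x + t • 1)) := by
  have ht₁ : t • (1 : R) ∈ S.A := S.A.smul_mem t S.one_mem
  have hu : x + t • 1 ∈ S.A := S.A.add_mem hx ht₁
  have hv : S.absval (x + t • 1) + t • 1 ∈ S.A := S.A.add_mem (S.absval_mem hu) ht₁
  have hsq (a : R) : (a + t • 1) * (a + t • 1) = a * a + (2 * t) • a + (t * t) • 1 := by
    simp only [mul_add, add_mul, smul_mul_assoc, mul_smul_comm, mul_one, one_mul]
    module
  have hcomm : S.absval x * (S.absval (x + t • 1) + t • 1)
      = (S.absval (x + t • 1) + t • 1) * S.absval x := by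
    have hxu : x * (x + t • 1) = (x + t • 1) * x := by
      simp only [mul_add, add_mul, smul_mul_assoc, mul_smul_comm, mul_one, one_mul]
    rw [mul_add, add_mul, mul_smul_comm, smul_mul_assoc, mul_one, one_mul,
      S.absval_commute hu (S.absval_mem hx) (S.absval_commute hx hu hxu).symm]
  -- `(|x + t| + t)² - |x|² = 4 t (x + t)⁺`
  have habs : S.le (S.absval x) (S.absval (x + t • 1) + t • 1) := by
    refine S.le_of_mul_self_le_mul_self (S.absval_mem hx) hv (S.absval_nonneg hx)
      (S.add_nonneg (S.absval_mem hu) ht₁ (S.absval_nonneg hu)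
        (S.smul_nonneg t ht 1 S.one_mem S.zero_le_one)) hcomm ?_
    rw [S.le_iff_sub_nonneg (S.sq_mem _ (S.absval_mem hx)) (S.sq_mem _ hv)]
    convert S.smul_nonneg (4 * t) (by positivity) _ (S.pospart_mem hu) (S.pospart_nonneg hu)
      using 1
    rw [hsq, S.absval_mul_self hu, S.absval_mul_self hx, hsq, pospart]
    module
  rw [S.le_iff_sub_nonneg (S.absval_mem hx) hv] at habs
  rw [S.le_iff_sub_nonneg (S.pospart_mem hx) (S.pospart_mem hu)]
  convert S.smul_nonneg 2⁻¹ (by norm_num) _ (S.A.sub_mem hv (S.absval_mem hx)) habs using 1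
  rw [pospart, pospart]
  module

lemma negpart_le_negpart_sub {c : R} (hc : c ∈ S.A) {t : ℝ} (ht : 0 ≤ t) :
    S.le (S.negpart c) (S.negpart (c - t • 1)) := by
  rw [← pospart_neg, ← pospart_neg, neg_sub, sub_eq_neg_add]
  exact S.pospart_le_pospart_add (S.A.neg_mem hc) ht

lemma negpart_le_negpart_add_add {b : R} (hb : b ∈ S.A) {t : ℝ} (ht : 0 ≤ t) :
    S.le (S.negpart b) (S.negpart (b + t • 1) + t • 1) := by
  have hu : b + t • 1 ∈ S.A := S.A.add_mem hb (S.A.smul_mem t S.one_mem)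
  convert S.add_le_add_right _ (S.pospart_mem hb) _ (S.pospart_mem hu) (-b) (S.A.neg_mem hb)
    (S.pospart_le_pospart_add hb ht) using 1 <;>
  · rw [pospart, negpart]; module

lemma absval_mul_eq_smul_of_mul_self_mul_eq {b d : R} (hb : b ∈ S.A) {t : ℝ} (ht : 0 < t)
    (h : b * b * d = (t * t) • d) : S.absval b * d = t • d := by
  have ht₁ : t • (1 : R) ∈ S.A := S.A.smul_mem t S.one_mem
  have hle : S.le (t • 1) (S.absval b + t • 1) := by
    simpa using S.add_le_add_right 0 S.A.zero_mem _ (S.absval_mem hb) _ ht₁ (S.absval_nonneg hb)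
  -- `(|b| + t) (|b| - t) d = (b² - t²) d = 0` and `|b| + t` is invertible
  have := S.eq_zero_of_smul_one_le_of_mul_eq_zero (S.A.add_mem (S.absval_mem hb) ht₁) ht hle
    (x := (S.absval b - t • 1) * d) <| by
      rw [← mul_assoc, add_mul, mul_sub, mul_sub, smul_mul_assoc, mul_smul_comm, smul_mul_assoc,
        one_mul, mul_one, one_mul, sub_add_sub_cancel, sub_mul, S.absval_mul_self hb, h,
        smul_smul, smul_mul_assoc, one_mul, sub_self]
  rwa [sub_mul, smul_mul_assoc, one_mul, sub_eq_zero] at this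

lemma carr_negpart_mul_one_sub_carr_negpart_sub {c : R} (hc : c ∈ S.A) {t : ℝ} (ht : 0 ≤ t) :
    S.carr (S.negpart c) * (1 - S.carr (S.negpart (c - t • 1))) = 0 := by
  have hN := S.negpart_mem (S.A.sub_mem hc (S.A.smul_mem t S.one_mem))
  have hr := (S.isProj_carr hN).one_sub
  have hle := S.conj_le_conj hr.1 (S.negpart_mem hc) hN hr.nonneg (S.negpart_le_negpart_sub hc ht)
  have hrN : (1 - S.carr (S.negpart (c - t • 1))) * S.negpart (c - t • 1) = 0 := by
    rw [sub_mul, one_mul, S.carr_mul hN, sub_self]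
  rw [hrN, zero_mul] at hle
  have h₀ := S.eq_zero_of_nonneg_of_nonpos (S.quad_mem _ hr.1 _ (S.negpart_mem hc))
    (S.quad_nn _ hr.1 _ (S.negpart_mem hc) hr.nonneg (S.negpart_nonneg hc)) hle
  exact S.carr_mul_eq_zero (S.negpart_mem hc) hr.1
    (S.quad_zero _ hr.1 _ (S.negpart_mem hc) (S.negpart_nonneg hc) h₀).2

lemma one_sub_carr_mul_one_sub_carr_negpart_sub {c : R} (hc : c ∈ S.A) {t : ℝ} (ht : 0 < t) :
    (1 - S.carr c) * (1 - S.carr (S.negpart (c - t • 1))) = 0 := by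
  have hb : c - t • 1 ∈ S.A := S.A.sub_mem hc (S.A.smul_mem t S.one_mem)
  have hd := (S.isProj_carr hc).one_sub
  have hr := (S.isProj_carr (S.negpart_mem hb)).one_sub
  -- `c` vanishes on the range of `1 - c°`, where therefore `(c - t)⁻ = t`
  have hbd : (c - t • 1) * (1 - S.carr c) = -(t • (1 - S.carr c)) := by
    rw [sub_mul, mul_sub, mul_one, S.mul_carr hc, sub_self, smul_mul_assoc, one_mul, zero_sub]
  have habs := S.absval_mul_eq_smul_of_mul_self_mul_eq hb ht (d := 1 - S.carr c) <| by
    rw [mul_assoc, hbd, mul_neg, mul_smul_comm, hbd, smul_neg, neg_neg, smul_smul]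
  have hNd : S.negpart (c - t • 1) * (1 - S.carr c) = t • (1 - S.carr c) := by
    rw [negpart, smul_mul_assoc, sub_mul, habs, hbd]; module
  have hrd : t • ((1 - S.carr (S.negpart (c - t • 1))) * (1 - S.carr c)) = 0 := by
    rw [← mul_smul_comm, ← hNd, ← mul_assoc, sub_mul, one_mul, S.carr_mul (S.negpart_mem hb),
      sub_self, zero_mul]
  exact S.mul_eq_zero_comm hr.1 hd.1 ((smul_eq_zero.1 hrd).resolve_left ht.ne')

lemma one_sub_carr_pospart_le_carr_negpart_sub {c : R} (hc : c ∈ S.A) {t : ℝ} (ht : 0 < t) :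
    S.le (1 - S.carr (S.pospart c)) (S.carr (S.negpart (c - t • 1))) := by
  have hN := S.negpart_mem (S.A.sub_mem hc (S.A.smul_mem t S.one_mem))
  rw [(S.isProj_carr (S.pospart_mem hc)).one_sub.le_iff_mul_eq (S.isProj_carr hN)]
  have h : (1 - S.carr (S.pospart c)) * (1 - S.carr (S.negpart (c - t • 1))) = 0 := by
    rw [show 1 - S.carr (S.pospart c) = (1 - S.carr c) + S.carr (S.negpart c) by
        rw [S.carr_eq_carr_pospart_add_carr_negpart hc]; abel,
      add_mul, S.one_sub_carr_mul_one_sub_carr_negpart_sub hc ht,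
      S.carr_negpart_mul_one_sub_carr_negpart_sub hc ht.le, add_zero]
  rw [mul_sub, mul_one, sub_eq_zero] at h
  exact h.symm

lemma carr_negpart_le_of_forall_negpart_add_mul_eq_zero {b e : R} (hb : b ∈ S.A)
    (he : S.IsProj e) (h : ∀ t : ℝ, 0 < t → S.negpart (b + t • 1) * (1 - e) = 0) :
    S.le (S.carr (S.negpart b)) e := by
  have hN := S.negpart_mem hb
  have hf := he.one_sub
  have hg := S.quad_mem _ hf.1 _ hN
  -- `(1 - e) b⁻ (1 - e) ≤ (1 - e) ((b + t)⁻ + t) (1 - e) = t (1 - e) ≤ t` for every `t > 0`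
  have hle (t : ℝ) (ht : 0 < t) : S.le ((1 - e) * S.negpart b * (1 - e)) (t • 1) := by
    have ht₁ : t • (1 : R) ∈ S.A := S.A.smul_mem t S.one_mem
    have h₁ := S.conj_le_conj hf.1 hN
      (S.A.add_mem (S.negpart_mem (S.A.add_mem hb ht₁)) ht₁) hf.nonneg
      (S.negpart_le_negpart_add_add hb ht.le)
    have hconj : (1 - e) * (S.negpart (b + t • 1) + t • 1) * (1 - e) = t • (1 - e) := by
      rw [mul_add, add_mul, mul_assoc _ (S.negpart _), h t ht, mul_zero, zero_add,
        mul_smul_comm, mul_one, smul_mul_assoc, hf.2]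
    rw [hconj] at h₁
    exact S.le_trans _ hg _ (S.A.smul_mem t hf.1) _ ht₁ h₁
      (S.smul_le_smul hf.1 S.one_mem ht.le hf.le_one)
  have h₀ := S.eq_zero_of_nonneg_of_nonpos hg
    (S.quad_nn _ hf.1 _ hN hf.nonneg (S.negpart_nonneg hb)) (S.nonpos_of_forall_le_smul_one hg hle)
  have hNf := S.carr_mul_eq_zero hN hf.1 (S.quad_zero _ hf.1 _ hN (S.negpart_nonneg hb) h₀).2
  rw [(S.isProj_carr hN).le_iff_mul_eq he]
  rwa [mul_sub, mul_one, sub_eq_zero, eq_comm] at hNf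

lemma isProj_specProj {a : R} (ha : a ∈ S.A) (l : ℝ) : S.IsProj (S.specProj a l) :=
  (S.isProj_carr (S.pospart_mem (S.A.sub_mem ha (S.algebraMap_mem l)))).one_sub

lemma isProjSup_carr_negpart {a : R} (ha : a ∈ S.A) (ρ : ℝ) :
    S.IsProjSup (S.carr (S.negpart (a - algebraMap ℝ R ρ)))
      {x | ∃ μ : ℝ, μ < ρ ∧ x = S.specProj a μ} := by
  have hb : a - algebraMap ℝ R ρ ∈ S.A := S.A.sub_mem ha (S.algebraMap_mem ρ)
  refine ⟨S.isProj_carr (S.negpart_mem hb), ?_, fun e he hub => ?_⟩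
  · rintro _ ⟨μ, hμ, rfl⟩
    have h := S.one_sub_carr_pospart_le_carr_negpart_sub (S.A.sub_mem ha (S.algebraMap_mem μ))
      (sub_pos.2 hμ)
    rwa [show a - algebraMap ℝ R μ - (ρ - μ) • 1 = a - algebraMap ℝ R ρ by
      rw [Algebra.algebraMap_eq_smul_one, Algebra.algebraMap_eq_smul_one]; module] at h
  · refine S.carr_negpart_le_of_forall_negpart_add_mul_eq_zero hb he fun t ht => ?_
    have hc : a - algebraMap ℝ R (ρ - t) ∈ S.A := S.A.sub_mem ha (S.algebraMap_mem _)
    have hpe := ((S.isProj_specProj ha _).le_iff_mul_eq he).1 (hub _ ⟨ρ - t, by linarith, rfl⟩)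
    have hNp : S.negpart (a - algebraMap ℝ R (ρ - t)) * S.specProj a (ρ - t)
        = S.negpart (a - algebraMap ℝ R (ρ - t)) :=
      S.negpart_mul_one_sub_carr_pospart hc
    rw [show a - algebraMap ℝ R ρ + t • 1 = a - algebraMap ℝ R (ρ - t) by
        rw [Algebra.algebraMap_eq_smul_one, Algebra.algebraMap_eq_smul_one]; module,
      ← hNp, mul_assoc, mul_sub, mul_one, hpe, sub_self, mul_zero]

lemma specProj_neg_eq (a : R) (l : ℝ) :
    S.specProj (-a) l = 1 - S.carr (S.negpart (a - algebraMap ℝ R (-l))) := by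
  rw [specProj, ← pospart_neg, map_neg]
  congr 3
  abel

lemma specProj_one_sub (a : R) (l : ℝ) : S.specProj (1 - a) l = S.specProj (-a) (l - 1) := by
  rw [specProj, specProj, map_sub, map_one]
  congr 3
  abel

end SynapticAlgebra

/-- For `a ∈ A` and `λ ∈ ℝ`:
(i) `p_{−a,λ} = 1 − p_{a,−λ} + d_{a,−λ}`;
(ii) `p_{−a,λ} = 1 − ⋁_{μ<−λ} p_{a,μ}`;
(iii) `p_{1−a,λ} = 1 − ⋁_{μ<1−λ} p_{a,μ}`. -/
theorem specProj_neg {R : Type*} [Ring R] [Algebra ℝ R]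
    (S : SynapticAlgebra R) (a : R) (ha : a ∈ S.A) (l : ℝ) :
    (S.specProj (-a) l = 1 - S.specProj a (-l) + S.eigenProj a (-l)) ∧
    (∀ q : R, S.IsProjSup q {x | ∃ μ : ℝ, μ < -l ∧ x = S.specProj a μ} →
      S.specProj (-a) l = 1 - q) ∧
    (∀ q : R, S.IsProjSup q {x | ∃ μ : ℝ, μ < 1 - l ∧ x = S.specProj a μ} →
      S.specProj (1 - a) l = 1 - q) := by
  refine ⟨?_, fun q hq => ?_, fun q hq => ?_⟩
  · rw [S.specProj_neg_eq, SynapticAlgebra.specProj, SynapticAlgebra.eigenProj,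
      S.carr_eq_carr_pospart_add_carr_negpart (S.A.sub_mem ha (S.algebraMap_mem _))]
    abel
  · rw [S.specProj_neg_eq, hq.unique (S.isProjSup_carr_negpart ha (-l))]
  · rw [S.specProj_one_sub, S.specProj_neg_eq, neg_sub,
      hq.unique (S.isProjSup_carr_negpart ha (1 - l))]
end

section
/- Let A be a synaptic algebra and let a, b ∈ A. Then 0 ≤ a if and only if 0 ≤ₛ a; and if 0 ≤ a, then a ≤ₛ b implies a ≤ b, which implies a° ≤ b°, which is equivalent to a° ≤ₛ b°. -/
open Filter Topology

section SAAux

open SynapticAlgebra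

variable {R : Type*} [Ring R] [Algebra ℝ R] {S : SynapticAlgebra R}

lemma SA_smul_one_mem (r : ℝ) : r • (1:R) ∈ S.A := S.A.smul_mem r S.one_mem

lemma SA_refl {a : R} (ha : a ∈ S.A) : S.le a a := S.le_refl a ha

lemma SA_trans {a b c : R} (ha : a ∈ S.A) (hb : b ∈ S.A) (hc : c ∈ S.A)
    (h1 : S.le a b) (h2 : S.le b c) : S.le a c := S.le_trans a ha b hb c hc h1 h2

lemma SA_antisymm {a b : R} (ha : a ∈ S.A) (hb : b ∈ S.A) (h1 : S.le a b) (h2 : S.le b a) :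
    a = b := S.le_antisymm a ha b hb h1 h2

lemma SA_sub_nonneg {a b : R} (ha : a ∈ S.A) (hb : b ∈ S.A) :
    S.le a b ↔ S.le 0 (b - a) := by
  constructor
  · intro h
    have h2 := S.add_le_add_right a ha b hb (-a) (S.A.neg_mem ha) h
    simpa [sub_eq_add_neg] using h2
  · intro h
    have h2 := S.add_le_add_right 0 S.A.zero_mem (b - a) (S.A.sub_mem hb ha) a ha h
    simpa using h2

lemma SA_nonneg_add {a b : R} (ha : a ∈ S.A) (hb : b ∈ S.A)
    (h1 : S.le 0 a) (h2 : S.le 0 b) : S.le 0 (a + b) := by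
  have h3 : S.le b (a + b) := by
    have h4 := S.add_le_add_right 0 S.A.zero_mem a ha b hb h1
    simpa [add_comm] using h4
  exact SA_trans S.A.zero_mem hb (S.A.add_mem ha hb) h2 h3

lemma SA_add_le_add {a b c d : R} (ha : a ∈ S.A) (hb : b ∈ S.A) (hc : c ∈ S.A) (hd : d ∈ S.A)
    (h1 : S.le a b) (h2 : S.le c d) : S.le (a + c) (b + d) := by
  have h3 := S.add_le_add_right a ha b hb c hc h1
  have h4 := S.add_le_add_right c hc d hd b hb h2
  rw [add_comm c b, add_comm d b] at h4
  exact SA_trans (S.A.add_mem ha hc) (S.A.add_mem hb hc) (S.A.add_mem hb hd) h3 h4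

lemma SA_smul_le {r : ℝ} (hr : 0 ≤ r) {a b : R} (ha : a ∈ S.A) (hb : b ∈ S.A)
    (h : S.le a b) : S.le (r • a) (r • b) := by
  have h0 : S.le 0 (b - a) := (SA_sub_nonneg ha hb).1 h
  have h1 := S.smul_nonneg r hr (b - a) (S.A.sub_mem hb ha) h0
  rw [smul_sub] at h1
  exact (SA_sub_nonneg (S.A.smul_mem r ha) (S.A.smul_mem r hb)).2 h1

lemma SA_neg_le {a b : R} (ha : a ∈ S.A) (hb : b ∈ S.A) (h : S.le a b) : S.le (-b) (-a) := by
  have h0 := (SA_sub_nonneg ha hb).1 h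
  apply (SA_sub_nonneg (S.A.neg_mem hb) (S.A.neg_mem ha)).2
  have he : -a - -b = b - a := by abel
  rw [he]; exact h0

lemma SA_one_nn : S.le 0 (1:R) := by
  have h := S.sq_nn 1 S.one_mem
  simpa using h

lemma SA_smul_one_nn {r : ℝ} (hr : 0 ≤ r) : S.le 0 (r • (1:R)) :=
  S.smul_nonneg r hr 1 S.one_mem SA_one_nn

lemma SA_arch_le {a b : R} (ha : a ∈ S.A) (hb : b ∈ S.A)
    (h : ∀ δ : ℝ, 0 < δ → S.le a (b + δ • (1:R))) : S.le a b := by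
  have hx : a - b ∈ S.A := S.A.sub_mem ha hb
  have key : ∀ n : ℕ, S.le ((n:ℝ) • (a - b)) 1 := by
    intro n
    cases n with
    | zero => simpa using (SA_one_nn (S := S))
    | succ m =>
      have hδ : (0:ℝ) < 1/(m+1) := by positivity
      have h1 := h _ hδ
      have h2 : S.le (a - b) ((1/(m+1):ℝ) • (1:R)) := by
        have h3 := (SA_sub_nonneg ha (S.A.add_mem hb (SA_smul_one_mem _))).1 h1
        have heq : b + (1/(m+1):ℝ) • (1:R) - a = (1/(m+1):ℝ) • (1:R) - (a - b) := by abel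
        rw [heq] at h3
        exact (SA_sub_nonneg hx (SA_smul_one_mem _)).2 h3
      have h3 := SA_smul_le (r := ((m:ℝ)+1)) (by positivity) hx (SA_smul_one_mem _) h2
      rw [smul_smul] at h3
      have h4 : ((m:ℝ)+1) * (1/(m+1)) = 1 := by field_simp
      rw [h4, one_smul] at h3
      have h5 : ((m+1 : ℕ):ℝ) = (m:ℝ)+1 := by push_cast; ring
      rw [h5]; exact h3
  have h6 := S.arch (a-b) hx 1 S.one_mem key
  have h7 := (SA_sub_nonneg hx S.A.zero_mem).1 h6
  rw [zero_sub] at h7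
  have h8 : -(a-b) = b - a := by abel
  rw [h8] at h7
  exact (SA_sub_nonneg ha hb).2 h7

lemma SA_mul_mem {x y : R} (hx : x ∈ S.A) (hy : y ∈ S.A) (hc : x * y = y * x) :
    x * y ∈ S.A := by
  have key : x * y = (2⁻¹:ℝ) • ((x+y)*(x+y) - x*x - y*y) := by
    have h1 : (x+y)*(x+y) - x*x - y*y = x*y + x*y := by
      rw [add_mul, mul_add, mul_add, ← hc]; abel
    rw [h1, ← two_smul ℝ (x*y), smul_smul]
    norm_num
  rw [key]
  exact S.A.smul_mem _ (S.A.sub_mem (S.A.sub_mem (S.sq_mem _ (S.A.add_mem hx hy))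
    (S.sq_mem _ hx)) (S.sq_mem _ hy))

lemma SA_mul_nonneg {x y : R} (hx : x ∈ S.A) (hy : y ∈ S.A)
    (hx0 : S.le 0 x) (hy0 : S.le 0 y) (hc : x * y = y * x) : S.le 0 (x * y) := by
  have htm : S.sqrt x ∈ S.A := S.sqrt_mem x hx hx0
  have htn : S.le 0 (S.sqrt x) := S.sqrt_nn x hx hx0
  have hts : S.sqrt x * S.sqrt x = x := S.sqrt_sq x hx hx0
  have htc : S.sqrt x * y = y * S.sqrt x := S.sqrt_bicomm x hx hx0 y hy hc
  have h1 : S.sqrt x * y * S.sqrt x = x * y := by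
    rw [mul_assoc, ← htc, ← mul_assoc, hts]
  rw [← h1]
  exact S.quad_nn _ htm y hy htn hy0

lemma SA_comm_mul {x y z : R} (h1 : z*x = x*z) (h2 : z*y = y*z) : z*(x*y) = (x*y)*z := by
  rw [← mul_assoc, h1, mul_assoc, h2, ← mul_assoc]

lemma SA_inv {x : R} (hx : x ∈ S.A) {ε : ℝ} (hε : 0 < ε) (h : S.le (ε • (1:R)) x) :
    ∃ z ∈ S.A, x * z = 1 ∧ z * x = 1 ∧ S.le 0 z ∧ ∀ w : R, x * w = w * x → z * w = w * z := by
  have hx0 : S.le 0 x :=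
    SA_trans S.A.zero_mem (SA_smul_one_mem ε) hx (SA_smul_one_nn hε.le) h
  have h1 : S.le 1 (ε⁻¹ • x) := by
    have h2 := SA_smul_le (r := ε⁻¹) (by positivity) (SA_smul_one_mem ε) hx h
    rwa [smul_smul, inv_mul_cancel₀ hε.ne', one_smul] at h2
  obtain ⟨v, hv, hv1, hv2⟩ := S.inv_exists (ε⁻¹ • x) (S.A.smul_mem _ hx) h1
  refine ⟨ε⁻¹ • v, S.A.smul_mem _ hv, ?_, ?_, ?_, ?_⟩
  · rw [mul_smul_comm]
    rw [smul_mul_assoc] at hv1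
    exact hv1
  · rw [smul_mul_assoc]
    rw [mul_smul_comm] at hv2
    exact hv2
  · -- positivity of the inverse
    set z := ε⁻¹ • v with hzdef
    have hz : z ∈ S.A := S.A.smul_mem _ hv
    have hz1 : x * z = 1 := by
      rw [hzdef, mul_smul_comm]; rw [smul_mul_assoc] at hv1; exact hv1
    have hz2 : z * x = 1 := by
      rw [hzdef, smul_mul_assoc]; rw [mul_smul_comm] at hv2; exact hv2
    have hts : S.sqrt x * S.sqrt x = x := S.sqrt_sq x hx hx0
    have htm : S.sqrt x ∈ S.A := S.sqrt_mem x hx hx0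
    have htz : S.sqrt x * z = z * S.sqrt x :=
      S.sqrt_bicomm x hx hx0 z hz (by rw [hz1, hz2])
    have hr : (z * S.sqrt x) * (S.sqrt x * z) = z := by
      rw [mul_assoc, ← mul_assoc (S.sqrt x) (S.sqrt x) z, hts, ← mul_assoc, hz2, one_mul]
    have hrr : (z * S.sqrt x) * (S.sqrt x * z) = (z * S.sqrt x) * (z * S.sqrt x) := by
      rw [htz]
    have hq := S.sq_nn (z * S.sqrt x) (SA_mul_mem hz htm htz.symm)
    rw [← hrr, hr] at hq
    exact hq
  · intro w hcw
    set z := ε⁻¹ • v with hzdef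
    have hz1 : x * z = 1 := by
      rw [hzdef, mul_smul_comm]; rw [smul_mul_assoc] at hv1; exact hv1
    have hz2 : z * x = 1 := by
      rw [hzdef, smul_mul_assoc]; rw [mul_smul_comm] at hv2; exact hv2
    calc z * w = z * (w * (x * z)) := by rw [hz1, mul_one]
      _ = z * ((w * x) * z) := by rw [mul_assoc w x z]
      _ = z * ((x * w) * z) := by rw [hcw]
      _ = (z * x) * (w * z) := by rw [mul_assoc x w z, ← mul_assoc]
      _ = w * z := by rw [hz2, one_mul]

end SAAux
section SAAux2
set_option linter.unusedSectionVars false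

open SynapticAlgebra

variable {R : Type*} [Ring R] [Algebra ℝ R] {S : SynapticAlgebra R}

lemma SA_le_of_sq_le {u v : R} (hu : u ∈ S.A) (hv : v ∈ S.A) (hu0 : S.le 0 u) (hv0 : S.le 0 v)
    (hc : u * v = v * u) (hsq : S.le (u*u) (v*v)) : S.le u v := by
  apply SA_arch_le hu hv
  intro δ hδ
  set w := v + δ • (1:R) + u with hw
  have hwm : w ∈ S.A := S.A.add_mem (S.A.add_mem hv (SA_smul_one_mem δ)) hu
  have hwge : S.le (δ • (1:R)) w := by
    apply (SA_sub_nonneg (SA_smul_one_mem δ) hwm).2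
    have h1 : w - δ • (1:R) = v + u := by rw [hw]; abel
    rw [h1]; exact SA_nonneg_add hv hu hv0 hu0
  obtain ⟨z, hz, hz1, hz2, hz0, hzc⟩ := SA_inv hwm hδ hwge
  have hum : u * w = w * u := by
    simp only [hw, mul_add, add_mul, mul_smul_comm, smul_mul_assoc, mul_one, one_mul, hc]
  have hvm : v * w = w * v := by
    simp only [hw, mul_add, add_mul, mul_smul_comm, smul_mul_assoc, mul_one, one_mul, hc]
  have hzu : z * u = u * z := hzc u hum.symm
  have hzv : z * v = v * z := hzc v hvm.symm
  set D := v + δ • (1:R) - u with hD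
  set E := v*v - u*u + (2*δ) • v + (δ*δ) • (1:R) with hE
  have hDm : D ∈ S.A := S.A.sub_mem (S.A.add_mem hv (SA_smul_one_mem δ)) hu
  have hEm : E ∈ S.A := S.A.add_mem (S.A.add_mem (S.A.sub_mem (S.sq_mem v hv) (S.sq_mem u hu))
    (S.A.smul_mem _ hv)) (SA_smul_one_mem _)
  have hE0 : S.le 0 E := by
    apply SA_nonneg_add (S.A.add_mem (S.A.sub_mem (S.sq_mem v hv) (S.sq_mem u hu))
      (S.A.smul_mem _ hv)) (SA_smul_one_mem _)
    · apply SA_nonneg_add (S.A.sub_mem (S.sq_mem v hv) (S.sq_mem u hu)) (S.A.smul_mem _ hv)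
      · exact (SA_sub_nonneg (S.sq_mem u hu) (S.sq_mem v hv)).1 hsq
      · exact S.smul_nonneg _ (by positivity) v hv hv0
    · exact SA_smul_one_nn (by positivity)
  have hDw : D * w = E := by
    simp only [hD, hw, hE, add_mul, mul_add, sub_mul, mul_sub, smul_mul_assoc, mul_smul_comm,
      one_mul, mul_one, smul_smul, hc]
    module
  have hDz : D = E * z := by
    have h1 : D * (w * z) = D := by rw [hz1, mul_one]
    rw [← h1, ← mul_assoc, hDw]
  have hzE : E * z = z * E := by
    simp only [hE, add_mul, mul_add, sub_mul, mul_sub, smul_mul_assoc, mul_smul_comm,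
      one_mul, mul_one]
    rw [SA_comm_mul hzv hzv, SA_comm_mul hzu hzu, hzv]
  have h2 : S.le 0 (E * z) := SA_mul_nonneg hEm hz hE0 hz0 hzE
  rw [← hDz] at h2
  have h3 := (SA_sub_nonneg hu (S.A.add_mem hv (SA_smul_one_mem δ))).2 (by
    have : v + δ • (1:R) - u = D := rfl
    rw [this]; exact h2)
  exact h3

lemma SA_abs_mem {c : R} (hc : c ∈ S.A) : S.absval c ∈ S.A :=
  S.sqrt_mem _ (S.sq_mem c hc) (S.sq_nn c hc)

lemma SA_abs_nn {c : R} (hc : c ∈ S.A) : S.le 0 (S.absval c) :=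
  S.sqrt_nn _ (S.sq_mem c hc) (S.sq_nn c hc)

lemma SA_abs_sq {c : R} (hc : c ∈ S.A) : S.absval c * S.absval c = c * c :=
  S.sqrt_sq _ (S.sq_mem c hc) (S.sq_nn c hc)

lemma SA_abs_comm {c y : R} (hc : c ∈ S.A) (hy : y ∈ S.A) (h : c*c*y = y*(c*c)) :
    S.absval c * y = y * S.absval c :=
  S.sqrt_bicomm _ (S.sq_mem c hc) (S.sq_nn c hc) y hy h

lemma SA_abs_comm_self {c : R} (hc : c ∈ S.A) : S.absval c * c = c * S.absval c :=
  SA_abs_comm hc hc (by rw [mul_assoc])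

lemma SA_abs_of_nonneg {c : R} (hc : c ∈ S.A) (h0 : S.le 0 c) : S.absval c = c := by
  have h1 : S.le (S.absval c) c :=
    SA_le_of_sq_le (SA_abs_mem hc) hc (SA_abs_nn hc) h0 (SA_abs_comm_self hc)
      (by rw [SA_abs_sq hc]; exact SA_refl (S.sq_mem c hc))
  have h2 : S.le c (S.absval c) :=
    SA_le_of_sq_le hc (SA_abs_mem hc) h0 (SA_abs_nn hc) (SA_abs_comm_self hc).symm
      (by rw [SA_abs_sq hc]; exact SA_refl (S.sq_mem c hc))
  exact SA_antisymm (SA_abs_mem hc) hc h1 h2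

lemma SA_abs_neg (c : R) : S.absval (-c) = S.absval c := by
  unfold SynapticAlgebra.absval
  rw [neg_mul_neg]

lemma SA_pos_mem {c : R} (hc : c ∈ S.A) : S.pospart c ∈ S.A :=
  S.A.smul_mem _ (S.A.add_mem (SA_abs_mem hc) hc)

lemma SA_pos_comm {c y : R} (hc : c ∈ S.A) (hy : y ∈ S.A) (h : c*y = y*c) :
    S.pospart c * y = y * S.pospart c := by
  unfold SynapticAlgebra.pospart
  rw [smul_mul_assoc, mul_smul_comm, add_mul, mul_add, h,
    SA_abs_comm hc hy (by rw [mul_assoc, h, ← mul_assoc, h, mul_assoc])]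

lemma SA_negpart_eq {c : R} : S.pospart (-c) = (2⁻¹:ℝ) • (S.absval c - c) := by
  unfold SynapticAlgebra.pospart
  rw [SA_abs_neg, sub_eq_add_neg]

lemma SA_pos_sub_neg {c : R} : S.pospart c - S.pospart (-c) = c := by
  rw [SA_negpart_eq]
  unfold SynapticAlgebra.pospart
  rw [← smul_sub]
  have h1 : S.absval c + c - (S.absval c - c) = c + c := by abel
  rw [h1, ← two_smul ℝ c, smul_smul]
  norm_num

lemma SA_pos_mul_neg {c : R} (hc : c ∈ S.A) : S.pospart c * S.pospart (-c) = 0 := by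
  rw [SA_negpart_eq]
  unfold SynapticAlgebra.pospart
  rw [smul_mul_assoc, mul_smul_comm, smul_smul, add_mul, mul_sub, mul_sub,
    SA_abs_sq hc, SA_abs_comm_self hc]
  simp <;> abel

lemma SA_neg_mul_pos {c : R} (hc : c ∈ S.A) : S.pospart (-c) * S.pospart c = 0 := by
  rw [SA_negpart_eq]
  unfold SynapticAlgebra.pospart
  rw [smul_mul_assoc, mul_smul_comm, smul_smul, sub_mul, mul_add, mul_add,
    SA_abs_sq hc, SA_abs_comm_self hc]
  simp <;> abel

end SAAux2
section SAAux3
set_option linter.unusedSectionVars false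

open SynapticAlgebra

variable {R : Type*} [Ring R] [Algebra ℝ R] {S : SynapticAlgebra R}

lemma SA_pos_nn {c : R} (hc : c ∈ S.A) : S.le 0 (S.pospart c) := by
  set m := S.absval c with hm
  have hmm : m ∈ S.A := SA_abs_mem hc
  have hm0 : S.le 0 m := SA_abs_nn hc
  have hmc : m * c = c * m := SA_abs_comm_self hc
  have hmsq : m * m = c * c := SA_abs_sq hc
  have hmcA : m + c ∈ S.A := S.A.add_mem hmm hc
  suffices hkey : S.le 0 (m + c) by
    exact S.smul_nonneg _ (by norm_num) _ hmcA hkey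
  apply SA_arch_le S.A.zero_mem hmcA
  intro δ hδ
  -- sδ := sqrt (c² + δ²)
  set g := c * c + (δ*δ) • (1:R) with hg
  have hgm : g ∈ S.A := S.A.add_mem (S.sq_mem c hc) (SA_smul_one_mem _)
  have hg0 : S.le 0 g := SA_nonneg_add (S.sq_mem c hc) (SA_smul_one_mem _)
    (S.sq_nn c hc) (SA_smul_one_nn (by positivity))
  set sδ := S.sqrt g with hsδ
  have hsm : sδ ∈ S.A := S.sqrt_mem g hgm hg0
  have hs0 : S.le 0 sδ := S.sqrt_nn g hgm hg0
  have hssq : sδ * sδ = g := S.sqrt_sq g hgm hg0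
  have hsc : sδ * c = c * sδ := S.sqrt_bicomm g hgm hg0 c hc (by
    simp only [hg, add_mul, mul_add, smul_mul_assoc, mul_smul_comm, one_mul, mul_one, mul_assoc])
  set x := sδ + c with hx
  have hxm : x ∈ S.A := S.A.add_mem hsm hc
  have hxu : x * (sδ - c) = (δ*δ) • (1:R) := by
    rw [hx, add_mul, mul_sub, mul_sub, hssq, hsc, hg]
    abel
  have hsx : sδ * x = x * sδ := by
    simp only [hx, mul_add, add_mul, hsc]
  set w := x * x + (δ*δ) • (1:R) with hw
  have hwm : w ∈ S.A := S.A.add_mem (S.sq_mem x hxm) (SA_smul_one_mem _)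
  have hxw : x * w = (x * x) * ((2:ℝ) • sδ) := by
    have h1 : x * x * (x + (sδ - c)) = x * w := by
      have e1 : x * (x + (sδ - c)) = x * x + (δ*δ) • (1:R) := by
        rw [mul_add, hxu]
      calc x * x * (x + (sδ - c)) = x * (x * (x + (sδ - c))) := by rw [mul_assoc]
        _ = x * (x * x + (δ*δ) • (1:R)) := by rw [e1]
        _ = x * w := by rw [hw]
    have h2 : x + (sδ - c) = (2:ℝ) • sδ := by
      rw [hx, two_smul]; abel
    rw [← h1, h2]
  have hxx2s : (x*x) * ((2:ℝ) • sδ) = ((2:ℝ) • sδ) * (x*x) := by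
    rw [mul_smul_comm, smul_mul_assoc, SA_comm_mul hsx hsx]
  have hxw0 : S.le 0 (x * w) := by
    rw [hxw]
    exact SA_mul_nonneg (S.sq_mem x hxm) (S.A.smul_mem _ hsm) (S.sq_nn x hxm)
      (S.smul_nonneg _ (by norm_num) _ hsm hs0) hxx2s
  have hwge : S.le ((δ*δ) • (1:R)) w := by
    apply (SA_sub_nonneg (SA_smul_one_mem _) hwm).2
    have h1 : w - (δ*δ) • (1:R) = x * x := by rw [hw]; abel
    rw [h1]; exact S.sq_nn x hxm
  obtain ⟨z, hz, hz1, hz2, hz0, hzc⟩ := SA_inv hwm (by positivity) hwge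
  have hxwc : w * x = x * w := by
    simp only [hw, add_mul, mul_add, smul_mul_assoc, mul_smul_comm, one_mul, mul_one, mul_assoc]
  have hzx : z * (x*w) = (x*w) * z := hzc (x*w) (by rw [← mul_assoc, ← hxwc, mul_assoc])
  have hx0 : S.le 0 x := by
    have h1 : x = (x * w) * z := by rw [mul_assoc, hz1, mul_one]
    rw [h1]
    exact SA_mul_nonneg (SA_mul_mem hxm hwm hxwc.symm) hz hxw0 hz0 hzx.symm
  -- sδ ≤ m + δ•1
  have hsmd : sδ * (m + δ • (1:R)) = (m + δ • (1:R)) * sδ := by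
    have h1 : sδ * m = m * sδ := by
      apply (S.sqrt_bicomm g hgm hg0 m hmm ?_)
      simp only [hg, add_mul, mul_add, smul_mul_assoc, mul_smul_comm, one_mul, mul_one]
      rw [← hmsq, ← mul_assoc, mul_assoc]
    simp only [mul_add, add_mul, h1, mul_smul_comm, smul_mul_assoc, mul_one, one_mul]
  have hsle : S.le sδ (m + δ • (1:R)) := by
    apply SA_le_of_sq_le hsm (S.A.add_mem hmm (SA_smul_one_mem δ)) hs0
      (SA_nonneg_add hmm (SA_smul_one_mem δ) hm0 (SA_smul_one_nn hδ.le)) hsmd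
    rw [hssq]
    apply (SA_sub_nonneg hgm (S.sq_mem _ (S.A.add_mem hmm (SA_smul_one_mem δ)))).2
    have h1 : (m + δ • (1:R)) * (m + δ • (1:R)) - g = (2*δ) • m := by
      simp only [hg, add_mul, mul_add, smul_mul_assoc, mul_smul_comm, one_mul, mul_one,
        smul_smul, hmsq]
      module
    rw [h1]
    exact S.smul_nonneg _ (by positivity) m hmm hm0
  -- conclude : 0 ≤ x = sδ + c ≤ m + δ1 + c
  have h2 : S.le x (m + δ • (1:R) + c) := by
    have := S.add_le_add_right sδ hsm (m + δ • (1:R)) (S.A.add_mem hmm (SA_smul_one_mem δ)) c hc hsle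
    exact this
  have h3 : S.le 0 (m + δ • (1:R) + c) :=
    SA_trans S.A.zero_mem hxm (S.A.add_mem (S.A.add_mem hmm (SA_smul_one_mem δ)) hc) hx0 h2
  have h4 : m + δ • (1:R) + c = m + c + δ • (1:R) := by abel
  rw [h4] at h3
  exact h3

lemma SA_pos_of_nonneg {c : R} (hc : c ∈ S.A) (h0 : S.le 0 c) : S.pospart c = c := by
  unfold SynapticAlgebra.pospart
  rw [SA_abs_of_nonneg hc h0, ← two_smul ℝ c, smul_smul]
  norm_num

lemma SA_pos_of_nonpos {c : R} (hc : c ∈ S.A) (h0 : S.le c 0) : S.pospart c = 0 := by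
  have h1 : S.le 0 (-c) := by
    have := (SA_sub_nonneg hc S.A.zero_mem).1 h0
    rwa [zero_sub] at this
  unfold SynapticAlgebra.pospart
  rw [← SA_abs_neg c, SA_abs_of_nonneg (S.A.neg_mem hc) h1]
  simp

lemma SA_neg_nn {c : R} (hc : c ∈ S.A) : S.le 0 (S.pospart (-c)) :=
  SA_pos_nn (S.A.neg_mem hc)

lemma SA_pos_shift {c : R} (hc : c ∈ S.A) {δ : ℝ} (hδ : 0 ≤ δ) :
    S.le (S.pospart (c - δ • (1:R))) (S.pospart c) := by
  set m := S.absval c with hm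
  have hmm : m ∈ S.A := SA_abs_mem hc
  have hm0 : S.le 0 m := SA_abs_nn hc
  have hmc : m * c = c * m := SA_abs_comm_self hc
  have hmsq : m * m = c * c := SA_abs_sq hc
  set d := c - δ • (1:R) with hd
  have hdm : d ∈ S.A := S.A.sub_mem hc (SA_smul_one_mem δ)
  set u := S.absval d with hu
  have hum : u ∈ S.A := SA_abs_mem hdm
  have hu0 : S.le 0 u := SA_abs_nn hdm
  have husq : u * u = d * d := SA_abs_sq hdm
  have hv0 : S.le 0 (m + δ • (1:R)) :=
    SA_nonneg_add hmm (SA_smul_one_mem δ) hm0 (SA_smul_one_nn hδ)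
  have hmd : m * d = d * m := by
    simp only [hd, mul_sub, sub_mul, hmc, mul_smul_comm, smul_mul_assoc, mul_one, one_mul]
  have hcomm : u * (m + δ • (1:R)) = (m + δ • (1:R)) * u := by
    have h1 : u * m = m * u := by
      apply SA_abs_comm hdm hmm
      rw [mul_assoc, ← hmd, ← mul_assoc, ← hmd, mul_assoc]
    simp only [mul_add, add_mul, h1, mul_smul_comm, smul_mul_assoc, mul_one, one_mul]
  have hle : S.le u (m + δ • (1:R)) := by
    apply SA_le_of_sq_le hum (S.A.add_mem hmm (SA_smul_one_mem δ)) hu0 hv0 hcomm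
    rw [husq]
    apply (SA_sub_nonneg (S.sq_mem d hdm) (S.sq_mem _ (S.A.add_mem hmm (SA_smul_one_mem δ)))).2
    have h1 : (m + δ • (1:R)) * (m + δ • (1:R)) - d * d
        = (2*δ) • (m + c) := by
      simp only [hd, add_mul, mul_add, sub_mul, mul_sub, smul_mul_assoc, mul_smul_comm,
        one_mul, mul_one, smul_smul, hmsq, hmc]
      module
    rw [h1]
    have hp := SA_pos_nn hc
    have h2 : (2*δ) • (m + c) = (4*δ) • S.pospart c := by
      unfold SynapticAlgebra.pospart
      rw [smul_smul, hm]
      norm_num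
      module
    rw [h2]
    exact S.smul_nonneg _ (by positivity) _ (SA_pos_mem hc) hp
  -- now pospart d = 2⁻¹ • (u + d) ≤ 2⁻¹•(m + δ1 + d) = pospart c
  have h3 : S.le (u + d) (m + δ • (1:R) + d) :=
    S.add_le_add_right u hum _ (S.A.add_mem hmm (SA_smul_one_mem δ)) d hdm hle
  have h4 : m + δ • (1:R) + d = m + c := by rw [hd]; abel
  rw [h4] at h3
  have h5 := SA_smul_le (r := (2⁻¹:ℝ)) (by norm_num) (S.A.add_mem hum hdm)
    (S.A.add_mem hmm hc) h3
  exact h5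

end SAAux3
section SAAux4
set_option linter.unusedSectionVars false

open SynapticAlgebra

variable {R : Type*} [Ring R] [Algebra ℝ R] {S : SynapticAlgebra R}

lemma SA_proj_nonneg {p : R} (hp : p ∈ S.A) (hpp : p * p = p) : S.le 0 p := by
  have := S.sq_nn p hp
  rwa [hpp] at this

lemma SA_one_sub_proj {p : R} (hpp : p * p = p) : (1 - p) * (1 - p) = 1 - p := by
  rw [sub_mul, mul_sub, mul_sub, hpp]
  simp

lemma SA_proj_le_one {p : R} (hp : p ∈ S.A) (hpp : p * p = p) : S.le p 1 := by
  apply (SA_sub_nonneg hp S.one_mem).2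
  exact SA_proj_nonneg (S.A.sub_mem S.one_mem hp) (SA_one_sub_proj hpp)

lemma SA_carr_projset {x : R} (hx : x ∈ S.A) :
    S.carr x ∈ S.A ∧ S.carr x * S.carr x = S.carr x ∧ S.le 0 (S.carr x) :=
  ⟨S.carr_mem x hx, S.carr_idem x hx,
    SA_proj_nonneg (S.carr_mem x hx) (S.carr_idem x hx)⟩

lemma SA_mul_one_sub_carr {x : R} (hx : x ∈ S.A) : x * (1 - S.carr x) = 0 := by
  apply (S.carr_spec x hx (1 - S.carr x) (S.A.sub_mem S.one_mem (S.carr_mem x hx))).2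
  rw [mul_sub, S.carr_idem x hx, mul_one, sub_self]

lemma SA_carr_mul {x : R} (hx : x ∈ S.A) (h0 : S.le 0 x) :
    x * S.carr x = x ∧ S.carr x * x = x := by
  have he : S.carr x ∈ S.A := S.carr_mem x hx
  have h1 : x * (1 - S.carr x) = 0 := SA_mul_one_sub_carr hx
  have h2 : (1 - S.carr x) * x * (1 - S.carr x) = 0 := by rw [mul_assoc, h1, mul_zero]
  have h3 := S.quad_zero (1 - S.carr x) (S.A.sub_mem S.one_mem he) x hx h0 h2
  constructor
  · have h4 := h3.2
    rw [mul_sub, mul_one, sub_eq_zero] at h4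
    exact h4.symm
  · have h4 := h3.1
    rw [sub_mul, one_mul, sub_eq_zero] at h4
    exact h4.symm

/-- from `e * y = 0` with `y ≥ 0`, `e` arbitrary in A, conclude `y * e = 0`. -/
lemma SA_flip_zero {e y : R} (he : e ∈ S.A) (hy : y ∈ S.A) (hy0 : S.le 0 y)
    (h : e * y = 0) : y * e = 0 := by
  have h2 : e * y * e = 0 := by rw [h, zero_mul]
  exact (S.quad_zero e he y hy hy0 h2).2

lemma SA_carr_zero : S.carr (0 : R) = 0 := by
  have h := (S.carr_spec 0 S.A.zero_mem 1 S.one_mem).1 (zero_mul 1)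
  rwa [mul_one] at h

lemma SA_carr_inv {x : R} (hx : x ∈ S.A) {ε : ℝ} (hε : 0 < ε) (h : S.le (ε • (1:R)) x) :
    S.carr x = 1 := by
  obtain ⟨z, hz, hz1, hz2, hz0, hzc⟩ := SA_inv hx hε h
  have h1 : x * (1 - S.carr x) = 0 := SA_mul_one_sub_carr hx
  have h2 : (1:R) - S.carr x = 0 := by
    calc (1:R) - S.carr x = (z * x) * (1 - S.carr x) := by rw [hz2, one_mul]
      _ = z * (x * (1 - S.carr x)) := by rw [mul_assoc]
      _ = 0 := by rw [h1, mul_zero]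
  have := sub_eq_zero.1 h2
  exact this.symm

lemma SA_flip_zero' {e y : R} (he : e ∈ S.A) (hy : y ∈ S.A) (hy0 : S.le 0 y)
    (h : y * e = 0) : e * y = 0 := by
  have h2 : e * y * e = 0 := by rw [mul_assoc, h, mul_zero]
  exact (S.quad_zero e he y hy hy0 h2).1

lemma SA_proj_eq_of_ann {e f : R} (he : e ∈ S.A) (hf : f ∈ S.A)
    (hee : e * e = e) (hff : f * f = f)
    (h1 : e * (1 - f) = 0) (h2 : f * (1 - e) = 0) : e = f := by
  have hf0 : S.le 0 f := SA_proj_nonneg hf hff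
  have h3 : (1 - e) * f = 0 := SA_flip_zero' (S.A.sub_mem S.one_mem he) hf hf0 h2
  have h4 : e * f = f := by
    rw [sub_mul, one_mul, sub_eq_zero] at h3
    exact h3.symm
  have h5 : e * f = e := by
    rw [mul_sub, mul_one, sub_eq_zero] at h1
    exact h1.symm
  rw [← h4, h5]

lemma SA_carr_of_proj {p : R} (hp : p ∈ S.A) (hpp : p * p = p) : S.carr p = p := by
  have he := SA_carr_projset hp
  apply SA_proj_eq_of_ann he.1 hp he.2.1 hpp
  · -- carr p * (1 - p) = 0 from p * (1-p) = 0
    apply (S.carr_spec p hp (1 - p) (S.A.sub_mem S.one_mem hp)).1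
    rw [mul_sub, hpp, mul_one, sub_self]
  · -- p * (1 - carr p) = 0
    exact SA_mul_one_sub_carr hp

lemma SA_carr_smul {x : R} (hx : x ∈ S.A) {r : ℝ} (hr : r ≠ 0) :
    S.carr (r • x) = S.carr x := by
  have hrx : r • x ∈ S.A := S.A.smul_mem r hx
  have hf := SA_carr_projset hrx
  have he := SA_carr_projset hx
  apply SA_proj_eq_of_ann hf.1 he.1 hf.2.1 he.2.1
  · -- carr (r•x) * (1 - carr x) = 0
    apply (S.carr_spec (r•x) hrx _ (S.A.sub_mem S.one_mem he.1)).1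
    rw [smul_mul_assoc, SA_mul_one_sub_carr hx, smul_zero]
  · -- carr x * (1 - carr (r•x)) = 0
    apply (S.carr_spec x hx _ (S.A.sub_mem S.one_mem hf.1)).1
    have h1 : (r • x) * (1 - S.carr (r • x)) = 0 := SA_mul_one_sub_carr hrx
    rw [smul_mul_assoc] at h1
    have h2 : x * (1 - S.carr (r • x)) = r⁻¹ • (r • (x * (1 - S.carr (r • x)))) := by
      rw [smul_smul, inv_mul_cancel₀ hr, one_smul]
    rw [h2, h1, smul_zero]

lemma SA_carr_mono {x y : R} (hx : x ∈ S.A) (hy : y ∈ S.A) (h0 : S.le 0 x) (hxy : S.le x y) :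
    S.carr x * S.carr y = S.carr x ∧ S.carr y * S.carr x = S.carr x ∧
      S.le (S.carr x) (S.carr y) := by
  have hy0 : S.le 0 y := SA_trans S.A.zero_mem hx hy h0 hxy
  have hep := SA_carr_projset hx
  have hfp := SA_carr_projset hy
  set e := S.carr x with hedef
  set f := S.carr y with hfdef
  have hq : (1:R) - f ∈ S.A := S.A.sub_mem S.one_mem hfp.1
  have hq0 : S.le 0 ((1:R) - f) := SA_proj_nonneg hq (SA_one_sub_proj hfp.2.1)
  have h1 : y * (1 - f) = 0 := SA_mul_one_sub_carr hy
  have h2 : (1 - f) * y = 0 := SA_flip_zero' hq hy hy0 h1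
  have h3 : (1 - f) * x * (1 - f) = 0 := by
    have ha1 : S.le 0 ((1-f) * x * (1-f)) := S.quad_nn _ hq x hx hq0 h0
    have ha2 : S.le ((1-f) * x * (1-f)) ((1-f) * y * (1-f)) := by
      have hd : S.le 0 ((1-f) * (y - x) * (1-f)) :=
        S.quad_nn _ hq (y - x) (S.A.sub_mem hy hx) hq0 ((SA_sub_nonneg hx hy).1 hxy)
      have heq : (1-f) * (y - x) * (1-f) = (1-f) * y * (1-f) - (1-f) * x * (1-f) := by
        noncomm_ring
      rw [heq] at hd
      exact (SA_sub_nonneg (S.quad_mem _ hq x hx) (S.quad_mem _ hq y hy)).2 hd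
    have ha3 : (1-f) * y * (1-f) = 0 := by rw [h2, zero_mul]
    rw [ha3] at ha2
    exact SA_antisymm (S.quad_mem _ hq x hx) S.A.zero_mem ha2 ha1
  have h4 := S.quad_zero (1-f) hq x hx h0 h3
  have h5 : e * (1 - f) = 0 := (S.carr_spec x hx _ hq).1 h4.2
  have h6 : (1 - f) * e = 0 := SA_flip_zero' hq hep.1 hep.2.2 h5
  have hef : e * f = e := by
    rw [mul_sub, mul_one, sub_eq_zero] at h5
    exact h5.symm
  have hfe : f * e = e := by
    rw [sub_mul, one_mul, sub_eq_zero] at h6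
    exact h6.symm
  refine ⟨hef, hfe, ?_⟩
  have h7 : (1 - e) * f * (1 - e) = f - e := by
    have e1 : (1-e) * f = f - e := by rw [sub_mul, one_mul, hef]
    rw [e1, sub_mul, mul_sub, mul_sub, mul_one, mul_one, hfe, hep.2.1]
    abel
  have h8 : S.le 0 (f - e) := by
    rw [← h7]
    exact S.quad_nn _ (S.A.sub_mem S.one_mem hep.1) f hfp.1
      (SA_proj_nonneg (S.A.sub_mem S.one_mem hep.1) (SA_one_sub_proj hep.2.1)) hfp.2.2
  exact (SA_sub_nonneg hep.1 hfp.1).2 h8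

end SAAux4
section SAAux5
set_option linter.unusedSectionVars false

open SynapticAlgebra

variable {R : Type*} [Ring R] [Algebra ℝ R] {S : SynapticAlgebra R}

lemma SA_specProj_eq (a : R) (l : ℝ) :
    S.specProj a l = 1 - S.carr (S.pospart (a - l • (1:R))) := by
  rw [SynapticAlgebra.specProj, Algebra.algebraMap_eq_smul_one]

lemma SA_spec_mem {a : R} (ha : a ∈ S.A) (l : ℝ) : S.specProj a l ∈ S.A := by
  rw [SA_specProj_eq]
  exact S.A.sub_mem S.one_mem (S.carr_mem _ (SA_pos_mem (S.A.sub_mem ha (SA_smul_one_mem l))))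

lemma SA_spec_idem {a : R} (ha : a ∈ S.A) (l : ℝ) :
    S.specProj a l * S.specProj a l = S.specProj a l := by
  rw [SA_specProj_eq]
  exact SA_one_sub_proj (S.carr_idem _ (SA_pos_mem (S.A.sub_mem ha (SA_smul_one_mem l))))

lemma SA_spec_nn {a : R} (ha : a ∈ S.A) (l : ℝ) : S.le 0 (S.specProj a l) :=
  SA_proj_nonneg (SA_spec_mem ha l) (SA_spec_idem ha l)

lemma SA_spec_le_one {a : R} (ha : a ∈ S.A) (l : ℝ) : S.le (S.specProj a l) 1 :=
  SA_proj_le_one (SA_spec_mem ha l) (SA_spec_idem ha l)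

/-- key multiplication facts for the spectral carrier. -/
lemma SA_spec_key {a : R} (ha : a ∈ S.A) (l : ℝ) :
    (a - l • (1:R)) * S.carr (S.pospart (a - l • (1:R))) = S.pospart (a - l • (1:R)) ∧
    S.carr (S.pospart (a - l • (1:R))) * (a - l • (1:R)) = S.pospart (a - l • (1:R)) ∧
    (a - l • (1:R)) * (1 - S.carr (S.pospart (a - l • (1:R)))) = -(S.pospart (-(a - l • (1:R)))) ∧
    (1 - S.carr (S.pospart (a - l • (1:R)))) * (a - l • (1:R)) = -(S.pospart (-(a - l • (1:R)))) := by
  set c := a - l • (1:R) with hcdef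
  have hc : c ∈ S.A := S.A.sub_mem ha (SA_smul_one_mem l)
  have hgm : S.pospart c ∈ S.A := SA_pos_mem hc
  have hg0 : S.le 0 (S.pospart c) := SA_pos_nn hc
  have hnm : S.pospart (-c) ∈ S.A := SA_pos_mem (S.A.neg_mem hc)
  have hn0 : S.le 0 (S.pospart (-c)) := SA_pos_nn (S.A.neg_mem hc)
  have hem : S.carr (S.pospart c) ∈ S.A := S.carr_mem _ hgm
  set e := S.carr (S.pospart c) with hedef
  have h1 : S.pospart c * e = S.pospart c := (SA_carr_mul hgm hg0).1
  have h2 : e * S.pospart c = S.pospart c := (SA_carr_mul hgm hg0).2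
  have h3 : S.pospart c * S.pospart (-c) = 0 := SA_pos_mul_neg hc
  have h4 : e * S.pospart (-c) = 0 := (S.carr_spec _ hgm _ hnm).1 h3
  have h5 : S.pospart (-c) * e = 0 := SA_flip_zero hem hnm hn0 h4
  have hsub : S.pospart c - S.pospart (-c) = c := SA_pos_sub_neg
  have k1 : c * e = S.pospart c := by
    conv_lhs => rw [← hsub]
    rw [sub_mul, h1, h5, sub_zero]
  have k2 : e * c = S.pospart c := by
    conv_lhs => rw [← hsub]
    rw [mul_sub, h2, h4, sub_zero]
  refine ⟨k1, k2, ?_, ?_⟩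
  · have h := congrArg (fun t => t - S.pospart c) hsub
    rw [mul_sub, mul_one, k1, ← h]
    abel
  · have h := congrArg (fun t => t - S.pospart c) hsub
    rw [sub_mul, one_mul, k2, ← h]
    abel

lemma SA_spec_carr_comm_a {a : R} (ha : a ∈ S.A) (l : ℝ) :
    S.carr (S.pospart (a - l • (1:R))) * a = a * S.carr (S.pospart (a - l • (1:R))) := by
  have hk := SA_spec_key ha l
  have h1 : S.carr (S.pospart (a - l • (1:R))) * (a - l • (1:R))
      = (a - l • (1:R)) * S.carr (S.pospart (a - l • (1:R))) := by rw [hk.1, hk.2.1]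
  have h2 := h1
  simp only [mul_sub, sub_mul, mul_smul_comm, smul_mul_assoc, mul_one, one_mul] at h2
  have := sub_left_injective (b := l • S.carr (S.pospart (a - l • (1:R))))
  -- h2 : e*a - l•e = a*e - l•e
  have h3 := congrArg (fun t => t + l • S.carr (S.pospart (a - l • (1:R)))) h2
  simpa using h3

lemma SA_spec_comm_a {a : R} (ha : a ∈ S.A) (l : ℝ) :
    S.specProj a l * a = a * S.specProj a l := by
  rw [SA_specProj_eq]
  have h := SA_spec_carr_comm_a ha l
  simp only [sub_mul, mul_sub, one_mul, mul_one, h]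

/-- products and order between two levels. -/
lemma SA_spec_levels {a : R} (ha : a ∈ S.A) {l m' : ℝ} (h : l ≤ m') :
    S.carr (S.pospart (a - m' • (1:R))) * S.carr (S.pospart (a - l • (1:R)))
        = S.carr (S.pospart (a - m' • (1:R))) ∧
    S.carr (S.pospart (a - l • (1:R))) * S.carr (S.pospart (a - m' • (1:R)))
        = S.carr (S.pospart (a - m' • (1:R))) ∧
    S.specProj a l * S.specProj a m' = S.specProj a l ∧
    S.specProj a m' * S.specProj a l = S.specProj a l ∧
    S.le (S.specProj a l) (S.specProj a m') := by
  have hcl : a - l • (1:R) ∈ S.A := S.A.sub_mem ha (SA_smul_one_mem l)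
  have hcm : a - m' • (1:R) ∈ S.A := S.A.sub_mem ha (SA_smul_one_mem m')
  have hshift : a - m' • (1:R) = (a - l • (1:R)) - (m' - l) • (1:R) := by
    rw [sub_smul]; abel
  have hle : S.le (S.pospart (a - m' • (1:R))) (S.pospart (a - l • (1:R))) := by
    rw [hshift]
    exact SA_pos_shift hcl (by linarith)
  have hmono := SA_carr_mono (SA_pos_mem hcm) (SA_pos_mem hcl) (SA_pos_nn hcm) hle
  set em := S.carr (S.pospart (a - m' • (1:R))) with hemdef
  set el := S.carr (S.pospart (a - l • (1:R))) with heldef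
  have hemA : em ∈ S.A := S.carr_mem _ (SA_pos_mem hcm)
  have helA : el ∈ S.A := S.carr_mem _ (SA_pos_mem hcl)
  refine ⟨hmono.1, hmono.2.1, ?_, ?_, ?_⟩
  · rw [SA_specProj_eq, SA_specProj_eq, ← hemdef, ← heldef]
    rw [sub_mul, mul_sub, mul_sub, one_mul, one_mul, mul_one, hmono.2.1]
    abel
  · rw [SA_specProj_eq, SA_specProj_eq, ← hemdef, ← heldef]
    rw [sub_mul, mul_sub, mul_sub, one_mul, one_mul, mul_one, hmono.1]
    abel
  · rw [SA_specProj_eq, SA_specProj_eq, ← hemdef, ← heldef]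
    apply (SA_sub_nonneg (S.A.sub_mem S.one_mem helA) (S.A.sub_mem S.one_mem hemA)).2
    have h1 : (1:R) - em - (1 - el) = el - em := by abel
    rw [h1]
    exact (SA_sub_nonneg hemA helA).1 hmono.2.2

/-- the two key sign inequalities. -/
lemma SA_spec_sign {a : R} (ha : a ∈ S.A) {l m' : ℝ} (h : l ≤ m') :
    S.le ((a - m' • (1:R)) * (S.specProj a m' - S.specProj a l)) 0 ∧
    S.le 0 ((a - l • (1:R)) * (S.specProj a m' - S.specProj a l)) := by
  have hcl : a - l • (1:R) ∈ S.A := S.A.sub_mem ha (SA_smul_one_mem l)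
  have hcm : a - m' • (1:R) ∈ S.A := S.A.sub_mem ha (SA_smul_one_mem m')
  have hlev := SA_spec_levels ha h
  have hkm := SA_spec_key ha m'
  have hkl := SA_spec_key ha l
  set em := S.carr (S.pospart (a - m' • (1:R))) with hemdef
  set el := S.carr (S.pospart (a - l • (1:R))) with heldef
  have hemA : em ∈ S.A := S.carr_mem _ (SA_pos_mem hcm)
  have helA : el ∈ S.A := S.carr_mem _ (SA_pos_mem hcl)
  have hel0 : S.le 0 el := SA_proj_nonneg helA (S.carr_idem _ (SA_pos_mem hcl))
  have hdiff : S.specProj a m' - S.specProj a l = el - em := by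
    rw [SA_specProj_eq, SA_specProj_eq, ← hemdef, ← heldef]; abel
  have helc : el * a = a * el := by
    rw [heldef]; exact SA_spec_carr_comm_a ha l
  have hemc : em * a = a * em := by
    rw [hemdef]; exact SA_spec_carr_comm_a ha m'
  constructor
  · -- (a - m')(P - p) = -(n_m * el) ≤ 0
    have h1 : el - em = (1 - em) * el := by
      rw [sub_mul, one_mul, hlev.1]
    have h2 : (a - m' • (1:R)) * ((1 - em) * el) = (-(S.pospart (-(a - m' • (1:R))))) * el := by
      rw [← mul_assoc, hkm.2.2.1]
    have hn : S.pospart (-(a - m' • (1:R))) ∈ S.A := SA_pos_mem (S.A.neg_mem hcm)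
    have hcomm : S.pospart (-(a - m' • (1:R))) * el = el * S.pospart (-(a - m' • (1:R))) := by
      apply SA_pos_comm (S.A.neg_mem hcm) helA
      have : (-(a - m' • (1:R))) * el = el * (-(a - m' • (1:R))) := by
        simp only [neg_mul, mul_neg, neg_inj]
        simp only [sub_mul, mul_sub, mul_smul_comm, smul_mul_assoc, mul_one, one_mul, helc]
        try simp only [smul_sub]
        try abel
      exact this
    have h3 : S.le 0 (S.pospart (-(a - m' • (1:R))) * el) :=
      SA_mul_nonneg hn helA (SA_pos_nn (S.A.neg_mem hcm)) hel0 hcomm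
    have h4 : S.le (-(S.pospart (-(a - m' • (1:R))) * el)) 0 := by
      have := SA_neg_le S.A.zero_mem (SA_mul_mem hn helA hcomm) h3
      rwa [neg_zero] at this
    rw [hdiff, h1, h2, neg_mul]
    exact h4
  · -- (a - l)(P - p) = g_l * P ≥ 0
    have h1 : el - em = el * (1 - em) := by
      rw [mul_sub, mul_one, hlev.2.1]
    have h2 : (a - l • (1:R)) * (el * (1 - em)) = S.pospart (a - l • (1:R)) * (1 - em) := by
      rw [← mul_assoc, hkl.1]
    have hgm : S.pospart (a - l • (1:R)) ∈ S.A := SA_pos_mem hcl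
    have h1em : (1:R) - em ∈ S.A := S.A.sub_mem S.one_mem hemA
    have hcomm : S.pospart (a - l • (1:R)) * (1 - em) = (1 - em) * S.pospart (a - l • (1:R)) := by
      apply SA_pos_comm hcl h1em
      simp only [sub_mul, mul_sub, mul_smul_comm, smul_mul_assoc, mul_one, one_mul, hemc]
      try simp only [smul_sub]
      try abel
    have h3 : S.le 0 (S.pospart (a - l • (1:R)) * (1 - em)) :=
      SA_mul_nonneg hgm h1em (SA_pos_nn hcl)
        (SA_proj_nonneg h1em (SA_one_sub_proj (S.carr_idem _ (SA_pos_mem hcm)))) hcomm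
    rw [hdiff, h1, h2]
    exact h3

lemma SA_specProj_lt_zero {a : R} (ha : a ∈ S.A) (h0 : S.le 0 a) {l : ℝ} (hl : l < 0) :
    S.specProj a l = 0 := by
  have hc : a - l • (1:R) ∈ S.A := S.A.sub_mem ha (SA_smul_one_mem l)
  have h1 : a - l • (1:R) = a + (-l) • (1:R) := by rw [neg_smul]; abel
  have hcn : S.le 0 (a - l • (1:R)) := by
    rw [h1]
    exact SA_nonneg_add ha (SA_smul_one_mem _) h0 (SA_smul_one_nn (by linarith))
  have h2 : S.le ((-l) • (1:R)) (a - l • (1:R)) := by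
    apply (SA_sub_nonneg (SA_smul_one_mem _) hc).2
    have h3 : a - l • (1:R) - (-l) • (1:R) = a := by rw [neg_smul]; abel
    rw [h3]; exact h0
  rw [SA_specProj_eq, SA_pos_of_nonneg hc hcn, SA_carr_inv hc (by linarith) h2, sub_self]

lemma SA_specProj_ge_bound {a : R} (ha : a ∈ S.A) {l : ℝ} (h : S.le a (l • (1:R))) :
    S.specProj a l = 1 := by
  have hc : a - l • (1:R) ∈ S.A := S.A.sub_mem ha (SA_smul_one_mem l)
  have h1 : S.le (a - l • (1:R)) 0 := by
    apply (SA_sub_nonneg hc S.A.zero_mem).2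
    have h2 : (0:R) - (a - l • (1:R)) = l • (1:R) - a := by abel
    rw [h2]
    exact (SA_sub_nonneg ha (SA_smul_one_mem l)).1 h
  rw [SA_specProj_eq, SA_pos_of_nonpos hc h1, SA_carr_zero, sub_zero]

end SAAux5
section SAAux6
set_option linter.unusedSectionVars false

open SynapticAlgebra

variable {R : Type*} [Ring R] [Algebra ℝ R] {S : SynapticAlgebra R}

lemma SA_specProj_proj {p : R} (hp : p ∈ S.A) (hpp : p * p = p) {l : ℝ}
    (h0 : 0 ≤ l) (h1 : l < 1) : S.specProj p l = 1 - p := by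
  have hc : p - l • (1:R) ∈ S.A := S.A.sub_mem hp (SA_smul_one_mem l)
  have h1p : (1:R) - p ∈ S.A := S.A.sub_mem S.one_mem hp
  set s := (1-l) • p + l • ((1:R) - p) with hsdef
  have hsm : s ∈ S.A := S.A.add_mem (S.A.smul_mem _ hp) (S.A.smul_mem _ h1p)
  have hs0 : S.le 0 s :=
    SA_nonneg_add (S.A.smul_mem _ hp) (S.A.smul_mem _ h1p)
      (S.smul_nonneg _ (by linarith) p hp (SA_proj_nonneg hp hpp))
      (S.smul_nonneg _ h0 _ h1p (SA_proj_nonneg h1p (SA_one_sub_proj hpp)))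
  have hsq : s * s = (p - l • (1:R)) * (p - l • (1:R)) := by
    simp only [hsdef, add_mul, mul_add, sub_mul, mul_sub, smul_mul_assoc, mul_smul_comm,
      one_mul, mul_one, smul_smul, smul_sub, hpp]
    module
  have habs : S.absval (p - l • (1:R)) = s := by
    have hccs : (p - l • (1:R)) * (p - l • (1:R)) * s = s * ((p - l • (1:R)) * (p - l • (1:R))) := by
      rw [← hsq, mul_assoc]
    have hcomm : S.absval (p - l • (1:R)) * s = s * S.absval (p - l • (1:R)) :=
      SA_abs_comm hc hsm hccs
    have hmsq : S.absval (p - l • (1:R)) * S.absval (p - l • (1:R)) = s * s := by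
      rw [SA_abs_sq hc, hsq]
    apply SA_antisymm (SA_abs_mem hc) hsm
    · exact SA_le_of_sq_le (SA_abs_mem hc) hsm (SA_abs_nn hc) hs0 hcomm
        (by rw [hmsq]; exact SA_refl (SA_mul_mem hsm hsm rfl))
    · exact SA_le_of_sq_le hsm (SA_abs_mem hc) hs0 (SA_abs_nn hc) hcomm.symm
        (by rw [hmsq]; exact SA_refl (SA_mul_mem hsm hsm rfl))
  have hpos : S.pospart (p - l • (1:R)) = (1-l) • p := by
    unfold SynapticAlgebra.pospart
    rw [habs]
    have h2 : s + (p - l • (1:R)) = (2*(1-l)) • p := by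
      rw [hsdef, smul_sub]
      module
    rw [h2, smul_smul]
    congr 1
    ring
  rw [SA_specProj_eq, hpos, SA_carr_smul hp (ne_of_gt (by linarith : (0:ℝ) < 1 - l)),
    SA_carr_of_proj hp hpp]

lemma SA_specProj_zero_elem (l : ℝ) :
    S.specProj (0:R) l = if l < 0 then 0 else 1 := by
  split
  · next hl => exact SA_specProj_lt_zero S.A.zero_mem (SA_refl S.A.zero_mem) hl
  · next hl =>
    apply SA_specProj_ge_bound S.A.zero_mem
    exact SA_smul_one_nn (by linarith)

lemma SA_specLE_zero_of_nonneg {a : R} (ha : a ∈ S.A) (h0 : S.le 0 a) : S.specLE 0 a := by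
  intro l
  rcases lt_or_ge l 0 with hl | hl
  · rw [SA_specProj_lt_zero ha h0 hl, SA_specProj_zero_elem, if_pos hl]
    exact SA_refl S.A.zero_mem
  · rw [SA_specProj_zero_elem, if_neg (not_lt.2 hl)]
    exact SA_spec_le_one ha l

lemma SA_nonneg_of_specLE_zero {a : R} (ha : a ∈ S.A) (h : S.specLE 0 a) : S.le 0 a := by
  apply SA_arch_le S.A.zero_mem ha
  intro δ hδ
  have hl : -δ < 0 := by linarith
  have h1 := h (-δ)
  rw [SA_specProj_zero_elem, if_pos hl] at h1
  have h2 : S.specProj a (-δ) = 0 :=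
    SA_antisymm (SA_spec_mem ha _) S.A.zero_mem h1 (SA_spec_nn ha _)
  set c := a - (-δ) • (1:R) with hcdef
  have hc : c ∈ S.A := S.A.sub_mem ha (SA_smul_one_mem _)
  have he1 : S.carr (S.pospart c) = 1 := by
    have h3 := SA_specProj_eq (S := S) a (-δ)
    rw [h2, ← hcdef] at h3
    have h4 := sub_eq_zero.1 h3.symm
    exact h4.symm
  have h5 : S.pospart c * S.pospart (-c) = 0 := SA_pos_mul_neg hc
  have h6 : S.carr (S.pospart c) * S.pospart (-c) = 0 :=
    (S.carr_spec _ (SA_pos_mem hc) _ (SA_pos_mem (S.A.neg_mem hc))).1 h5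
  rw [he1, one_mul] at h6
  have h7 : S.pospart c - S.pospart (-c) = c := SA_pos_sub_neg
  rw [h6, sub_zero] at h7
  have h8 : S.le 0 c := by rw [← h7]; exact SA_pos_nn hc
  have h9 : c = a + δ • (1:R) := by rw [hcdef, neg_smul]; abel
  rw [h9] at h8
  exact h8

lemma SA_proj_le_iff_specLE {p q : R} (hp : p ∈ S.A) (hpp : p * p = p)
    (hq : q ∈ S.A) (hqq : q * q = q) :
    S.le p q ↔ S.specLE p q := by
  constructor
  · intro hpq l
    rcases lt_or_ge l 0 with hl | hl
    · rw [SA_specProj_lt_zero hp (SA_proj_nonneg hp hpp) hl,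
        SA_specProj_lt_zero hq (SA_proj_nonneg hq hqq) hl]
      exact SA_refl S.A.zero_mem
    · rcases lt_or_ge l 1 with hl1 | hl1
      · rw [SA_specProj_proj hp hpp hl hl1, SA_specProj_proj hq hqq hl hl1]
        apply (SA_sub_nonneg (S.A.sub_mem S.one_mem hq) (S.A.sub_mem S.one_mem hp)).2
        have h1 : (1:R) - p - (1 - q) = q - p := by abel
        rw [h1]
        exact (SA_sub_nonneg hp hq).1 hpq
      · have hb : ∀ {r : R}, r ∈ S.A → r * r = r → S.specProj r l = 1 := by
          intro r hr hrr
          apply SA_specProj_ge_bound hr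
          have h2 : S.le r (1:R) := SA_proj_le_one hr hrr
          have h3 : S.le (1:R) (l • (1:R)) := by
            apply (SA_sub_nonneg S.one_mem (SA_smul_one_mem l)).2
            have h4 : l • (1:R) - 1 = (l - 1) • (1:R) := by rw [sub_smul, one_smul]
            rw [h4]
            exact SA_smul_one_nn (by linarith)
          exact SA_trans hr S.one_mem (SA_smul_one_mem l) h2 h3
        rw [hb hp hpp, hb hq hqq]
        exact SA_refl S.one_mem
  · intro hs
    have h1 := hs 0
    rw [SA_specProj_proj hp hpp le_rfl one_pos, SA_specProj_proj hq hqq le_rfl one_pos] at h1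
    have h2 := (SA_sub_nonneg (S.A.sub_mem S.one_mem hq) (S.A.sub_mem S.one_mem hp)).1 h1
    have h3 : (1:R) - p - (1 - q) = q - p := by abel
    rw [h3] at h2
    exact (SA_sub_nonneg hp hq).2 h2

end SAAux6
section SAAux7
set_option linter.unusedSectionVars false

open SynapticAlgebra Finset

variable {R : Type*} [Ring R] [Algebra ℝ R] {S : SynapticAlgebra R}

lemma SA_sum_mem {f : ℕ → R} (h : ∀ i, f i ∈ S.A) (n : ℕ) :
    (∑ i ∈ Finset.range n, f i) ∈ S.A :=
  Submodule.sum_mem _ (fun i _ => h i)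

lemma SA_sum_nonneg {f : ℕ → R} (hm : ∀ i, f i ∈ S.A) (hn : ∀ i, S.le 0 (f i)) (n : ℕ) :
    S.le 0 (∑ i ∈ Finset.range n, f i) := by
  induction n with
  | zero => simpa using SA_refl (S := S) S.A.zero_mem
  | succ m ih =>
    rw [Finset.sum_range_succ]
    exact SA_nonneg_add (SA_sum_mem hm m) (hm m) ih (hn m)

lemma SA_abel_identity (δ : ℝ) (g : ℕ → R) (n : ℕ) :
    ∑ i ∈ Finset.range n, (δ * (i:ℝ)) • (g (i+1) - g i)
      = (δ * (n:ℝ)) • g n - δ • (∑ i ∈ Finset.range n, g (i+1)) := by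
  induction n with
  | zero => simp
  | succ m ih =>
    rw [Finset.sum_range_succ, ih, Finset.sum_range_succ]
    push_cast
    module

lemma SA_le_of_specLE {a b : R} (ha : a ∈ S.A) (hb : b ∈ S.A) (ha0 : S.le 0 a)
    (hs : S.specLE a b) : S.le a b := by
  have hb0 : S.le 0 b := by
    apply SA_nonneg_of_specLE_zero hb
    intro l
    exact SA_trans (SA_spec_mem hb l) (SA_spec_mem ha l) (SA_spec_mem S.A.zero_mem l)
      (hs l) (SA_specLE_zero_of_nonneg ha ha0 l)
  obtain ⟨n₁, hn₁⟩ := S.one_order_unit a ha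
  obtain ⟨n₂, hn₂⟩ := S.one_order_unit b hb
  set N : ℝ := ((max n₁ n₂ : ℕ) : ℝ) with hNdef
  have hN0 : 0 ≤ N := by positivity
  have hbound : ∀ {x : R}, x ∈ S.A → ∀ {k : ℕ}, S.le x ((k:ℝ) • (1:R)) → k ≤ max n₁ n₂ →
      S.le x (N • (1:R)) := by
    intro x hx k h1 h2
    apply SA_trans hx (SA_smul_one_mem _) (SA_smul_one_mem _) h1
    apply (SA_sub_nonneg (SA_smul_one_mem _) (SA_smul_one_mem _)).2
    have h3 : N • (1:R) - (k:ℝ) • (1:R) = (N - k) • (1:R) := by rw [sub_smul]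
    rw [h3]
    apply SA_smul_one_nn
    have : (k:ℝ) ≤ N := by rw [hNdef]; exact_mod_cast h2
    linarith
  have haN : S.le a (N • (1:R)) := hbound ha hn₁ (le_max_left _ _)
  have hbN : S.le b (N • (1:R)) := hbound hb hn₂ (le_max_right _ _)
  apply SA_arch_le ha hb
  intro δ hδ
  set n : ℕ := ⌈N / δ⌉₊ + 1 with hndef
  have hlamn : N ≤ δ * (n:ℝ) - δ := by
    have h1 : N / δ ≤ ((⌈N / δ⌉₊ : ℕ) : ℝ) := Nat.le_ceil _
    have h2 : N ≤ δ * ((⌈N / δ⌉₊ : ℕ) : ℝ) := by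
      calc N = δ * (N / δ) := by field_simp
        _ ≤ δ * ((⌈N / δ⌉₊ : ℕ) : ℝ) := by
            exact mul_le_mul_of_nonneg_left h1 hδ.le
    have h3 : δ * (n:ℝ) - δ = δ * ((⌈N / δ⌉₊ : ℕ) : ℝ) := by
      rw [hndef]; push_cast; ring
    linarith
  set P : ℕ → R := fun i => S.specProj a (δ * (i:ℝ) - δ) with hPdef
  set Q : ℕ → R := fun i => S.specProj b (δ * (i:ℝ) - δ) with hQdef
  have hPmem : ∀ i, P i ∈ S.A := fun i => SA_spec_mem ha _
  have hQmem : ∀ i, Q i ∈ S.A := fun i => SA_spec_mem hb _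
  have hP0 : P 0 = 0 := by
    rw [hPdef]
    simp only [Nat.cast_zero, mul_zero, zero_sub]
    exact SA_specProj_lt_zero ha ha0 (by linarith)
  have hQ0 : Q 0 = 0 := by
    rw [hQdef]
    simp only [Nat.cast_zero, mul_zero, zero_sub]
    exact SA_specProj_lt_zero hb hb0 (by linarith)
  have hPn : P n = 1 := by
    rw [hPdef]
    apply SA_specProj_ge_bound ha
    exact SA_trans ha (SA_smul_one_mem _) (SA_smul_one_mem _) haN
      ((SA_sub_nonneg (SA_smul_one_mem _) (SA_smul_one_mem _)).2 (by
        rw [← sub_smul]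
        exact SA_smul_one_nn (by linarith)))
  have hQn : Q n = 1 := by
    rw [hQdef]
    apply SA_specProj_ge_bound hb
    exact SA_trans hb (SA_smul_one_mem _) (SA_smul_one_mem _) hbN
      ((SA_sub_nonneg (SA_smul_one_mem _) (SA_smul_one_mem _)).2 (by
        rw [← sub_smul]
        exact SA_smul_one_nn (by linarith)))
  have hlam : ∀ i : ℕ, δ * ((i+1 : ℕ):ℝ) - δ = δ * (i:ℝ) := by
    intro i; push_cast; ring
  have hP1 : ∀ i : ℕ, P (i+1) = S.specProj a (δ*(i:ℝ)) := by
    intro i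
    show S.specProj a (δ * ((i+1:ℕ):ℝ) - δ) = S.specProj a (δ*(i:ℝ))
    exact congrArg (S.specProj a) (hlam i)
  have hQ1 : ∀ i : ℕ, Q (i+1) = S.specProj b (δ*(i:ℝ)) := by
    intro i
    show S.specProj b (δ * ((i+1:ℕ):ℝ) - δ) = S.specProj b (δ*(i:ℝ))
    exact congrArg (S.specProj b) (hlam i)
  have hPi : ∀ i : ℕ, P i = S.specProj a (δ*(i:ℝ) - δ) := fun i => rfl
  have hQi : ∀ i : ℕ, Q i = S.specProj b (δ*(i:ℝ) - δ) := fun i => rfl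
  -- the two termwise sign inequalities
  have hterm1 : ∀ i : ℕ, S.le ((a - (δ*(i:ℝ)) • (1:R)) * (P (i+1) - P i)) 0 := by
    intro i
    rw [hP1 i, hPi i]
    exact (SA_spec_sign ha (l := δ*(i:ℝ) - δ) (m' := δ*(i:ℝ)) (by linarith)).1
  have hterm2 : ∀ i : ℕ, S.le 0 ((b - (δ*(i:ℝ) - δ) • (1:R)) * (Q (i+1) - Q i)) := by
    intro i
    rw [hQ1 i, hQi i]
    exact (SA_spec_sign hb (l := δ*(i:ℝ) - δ) (m' := δ*(i:ℝ)) (by linarith)).2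
  -- commutation and membership of the terms
  have hPca : ∀ j, P j * a = a * P j := fun j => SA_spec_comm_a ha _
  have hQcb : ∀ j, Q j * b = b * Q j := fun j => SA_spec_comm_a hb _
  have hcommP : ∀ (r : ℝ) (i j : ℕ),
      (a - r • (1:R)) * (P i - P j) = (P i - P j) * (a - r • (1:R)) := by
    intro r i j
    simp only [sub_mul, mul_sub, smul_mul_assoc, mul_smul_comm, one_mul, mul_one,
      hPca i, hPca j, smul_sub]
    abel
  have hcommQ : ∀ (r : ℝ) (i j : ℕ),
      (b - r • (1:R)) * (Q i - Q j) = (Q i - Q j) * (b - r • (1:R)) := by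
    intro r i j
    simp only [sub_mul, mul_sub, smul_mul_assoc, mul_smul_comm, one_mul, mul_one,
      hQcb i, hQcb j, smul_sub]
    abel
  have htermmem1 : ∀ i : ℕ, (a - (δ*(i:ℝ)) • (1:R)) * (P (i+1) - P i) ∈ S.A := by
    intro i
    exact SA_mul_mem (S.A.sub_mem ha (SA_smul_one_mem _))
      (S.A.sub_mem (hPmem (i+1)) (hPmem i)) (hcommP _ _ _)
  have htermmem2 : ∀ i : ℕ, (b - (δ*(i:ℝ) - δ) • (1:R)) * (Q (i+1) - Q i) ∈ S.A := by
    intro i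
    exact SA_mul_mem (S.A.sub_mem hb (SA_smul_one_mem _))
      (S.A.sub_mem (hQmem (i+1)) (hQmem i)) (hcommQ _ _ _)
  -- upper and lower sums
  set U := ∑ i ∈ Finset.range n, (δ*(i:ℝ)) • (P (i+1) - P i) with hUdef
  set L := ∑ i ∈ Finset.range n, (δ*(i:ℝ) - δ) • (Q (i+1) - Q i) with hLdef
  have hUmem : U ∈ S.A := SA_sum_mem (fun i =>
    S.A.smul_mem _ (S.A.sub_mem (hPmem (i+1)) (hPmem i))) n
  have hLmem : L ∈ S.A := SA_sum_mem (fun i =>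
    S.A.smul_mem _ (S.A.sub_mem (hQmem (i+1)) (hQmem i))) n
  -- a ≤ U
  have haU : S.le a U := by
    have htel : ∑ i ∈ Finset.range n, (a * P (i+1) - a * P i) = a := by
      rw [Finset.sum_range_sub (fun i => a * P i) n, hPn, hP0, mul_one, mul_zero, sub_zero]
    have hdiff : U - a = ∑ i ∈ Finset.range n,
        ((δ*(i:ℝ)) • (P (i+1) - P i) - (a * P (i+1) - a * P i)) := by
      rw [Finset.sum_sub_distrib, htel]
    have hterm_eq : ∀ i : ℕ, (δ*(i:ℝ)) • (P (i+1) - P i) - (a * P (i+1) - a * P i)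
        = -((a - (δ*(i:ℝ)) • (1:R)) * (P (i+1) - P i)) := by
      intro i
      rw [← mul_sub a, sub_mul, smul_mul_assoc, one_mul, neg_sub]
    have h2 : S.le 0 (U - a) := by
      rw [hdiff]
      apply SA_sum_nonneg
      · intro i; rw [hterm_eq i]; exact S.A.neg_mem (htermmem1 i)
      · intro i
        rw [hterm_eq i]
        have h3 := (SA_sub_nonneg (htermmem1 i) S.A.zero_mem).1 (hterm1 i)
        rwa [zero_sub] at h3
    exact (SA_sub_nonneg ha hUmem).2 h2
  -- L ≤ b
  have hbL : S.le L b := by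
    have htel : ∑ i ∈ Finset.range n, (b * Q (i+1) - b * Q i) = b := by
      rw [Finset.sum_range_sub (fun i => b * Q i) n, hQn, hQ0, mul_one, mul_zero, sub_zero]
    have hdiff : b - L = ∑ i ∈ Finset.range n,
        ((b * Q (i+1) - b * Q i) - (δ*(i:ℝ) - δ) • (Q (i+1) - Q i)) := by
      rw [Finset.sum_sub_distrib, htel]
    have hterm_eq : ∀ i : ℕ, (b * Q (i+1) - b * Q i) - (δ*(i:ℝ) - δ) • (Q (i+1) - Q i)
        = (b - (δ*(i:ℝ) - δ) • (1:R)) * (Q (i+1) - Q i) := by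
      intro i
      rw [sub_mul, smul_mul_assoc, one_mul, mul_sub b]
    have h2 : S.le 0 (b - L) := by
      rw [hdiff]
      apply SA_sum_nonneg
      · intro i; rw [hterm_eq i]; exact htermmem2 i
      · intro i; rw [hterm_eq i]; exact hterm2 i
    exact (SA_sub_nonneg hLmem hb).2 h2
  -- U ≤ L + δ•1
  have hUL : S.le U (L + δ • (1:R)) := by
    have hUeq : U = (δ*(n:ℝ)) • (1:R) - δ • (∑ i ∈ Finset.range n, P (i+1)) := by
      rw [hUdef, SA_abel_identity δ P n, hPn]
    have hLsplit : L = ∑ i ∈ Finset.range n, ((δ*(i:ℝ)) • (Q (i+1) - Q i)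
        - δ • (Q (i+1) - Q i)) := by
      rw [hLdef]
      congr 1
      ext i
      rw [sub_smul]
    have hLeq : L = (δ*(n:ℝ)) • (1:R) - δ • (∑ i ∈ Finset.range n, Q (i+1)) - δ • (1:R) := by
      rw [hLsplit, Finset.sum_sub_distrib, SA_abel_identity δ Q n, hQn, ← Finset.smul_sum,
        Finset.sum_range_sub (fun i => Q i) n, hQn, hQ0, sub_zero]
    have hdist : (L + δ • (1:R)) - U
        = δ • (∑ i ∈ Finset.range n, (P (i+1) - Q (i+1))) := by
      rw [hUeq, hLeq, Finset.sum_sub_distrib, smul_sub]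
      abel
    have h2 : S.le 0 ((L + δ • (1:R)) - U) := by
      rw [hdist]
      apply S.smul_nonneg δ hδ.le _ (SA_sum_mem (fun i =>
        S.A.sub_mem (hPmem (i+1)) (hQmem (i+1))) n)
      apply SA_sum_nonneg (fun i => S.A.sub_mem (hPmem (i+1)) (hQmem (i+1)))
      intro i
      exact (SA_sub_nonneg (hQmem (i+1)) (hPmem (i+1))).1 (hs _)
    exact (SA_sub_nonneg hUmem (S.A.add_mem hLmem (SA_smul_one_mem δ))).2 h2
  -- chain
  have hfinal : S.le (L + δ • (1:R)) (b + δ • (1:R)) :=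
    S.add_le_add_right L hLmem b hb (δ • (1:R)) (SA_smul_one_mem δ) hbL
  exact SA_trans ha hUmem (S.A.add_mem hb (SA_smul_one_mem δ)) haU
    (SA_trans hUmem (S.A.add_mem hLmem (SA_smul_one_mem δ))
      (S.A.add_mem hb (SA_smul_one_mem δ)) hUL hfinal)

end SAAux7

/-- `0 ≤ a ↔ 0 ≤ₛ a`; and if `0 ≤ a`, then
`a ≤ₛ b ⇒ a ≤ b ⇒ a° ≤ b° ⇔ a° ≤ₛ b°`. -/
theorem nonneg_specLE_carrier {R : Type*} [Ring R] [Algebra ℝ R]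
    (S : SynapticAlgebra R) (a b : R) (ha : a ∈ S.A) (hb : b ∈ S.A) :
    (S.le 0 a ↔ S.specLE 0 a) ∧
    (S.le 0 a →
      (S.specLE a b → S.le a b) ∧
      (S.le a b → S.le (S.carr a) (S.carr b)) ∧
      (S.le (S.carr a) (S.carr b) ↔ S.specLE (S.carr a) (S.carr b))) := by
  refine ⟨⟨fun h => SA_specLE_zero_of_nonneg ha h, fun h => SA_nonneg_of_specLE_zero ha h⟩,
    fun ha0 => ⟨fun hs => SA_le_of_specLE ha hb ha0 hs,
      fun hab => (SA_carr_mono ha hb ha0 hab).2.2,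
      SA_proj_le_iff_specLE (S.carr_mem a ha) (S.carr_idem a ha)
        (S.carr_mem b hb) (S.carr_idem b hb)⟩⟩
end
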